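/- arXiv:1308.4087 — 5 statements merged into one kernel-verified Lean document; each statement's English description precedes it below -/
import Mathlib

section
/- For every integer n ≥ 2, the subsemigroup of A^+(B_n) generated by the set S = {ξ_(i,i+1) : i ∈ [n−1]} ∪ {ξ_(n,1)} is exactly C_{B_n}, the set of all constant maps on B_n. -/
/-- The Brandt semigroup `B_n`, modeled as `Option (Fin n × Fin n)` where
`none` plays the role of the (two-sided) zero element `ϑ`. -/
def Brandt (n : ℕ) : Type := Option (Fin n × Fin n)

instance (n : ℕ) : DecidableEq (Brandt n) :=
  inferInstanceAs (DecidableEq (Option (Fin n × Fin n)))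

instance (n : ℕ) : Fintype (Brandt n) :=
  inferInstanceAs (Fintype (Option (Fin n × Fin n)))

namespace Brandt

/-- The zero element `ϑ` of `B_n`. -/
def theta (n : ℕ) : Brandt n := none

/-- The element `(i, j)` of `B_n`. -/
def pair {n : ℕ} (i j : Fin n) : Brandt n := some (i, j)

/-- The addition of the Brandt semigroup:
`(i,j) + (k,l) = (i,l)` if `j = k` and `ϑ` otherwise; `ϑ` is absorbing. -/
def add {n : ℕ} : Option (Fin n × Fin n) → Option (Fin n × Fin n) → Option (Fin n × Fin n)
  | some (i, j), some (k, l) => if j = k then some (i, l) else none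
  | _, _ => none

instance (n : ℕ) : Add (Brandt n) := ⟨fun a b => Brandt.add a b⟩

end Brandt

/-- `M(B_n)`: all self-maps of `B_n`, with pointwise addition. -/
abbrev MB (n : ℕ) := Brandt n → Brandt n

/-- `g` is an endomorphism of `(B_n, +)`. -/
def IsEndo {n : ℕ} (g : MB n) : Prop := ∀ a b : Brandt n, g (a + b) = g a + g b

/-- `g` is an automorphism of `(B_n, +)`. -/
def IsAuto {n : ℕ} (g : MB n) : Prop := IsEndo g ∧ Function.Bijective g

/-- The constant map `ξ_c` on `B_n` with value `c`. -/
def xi {n : ℕ} (c : Brandt n) : MB n := fun _ => c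

/-- `C_{B_n}`, the set of all constant maps on `B_n`. -/
def ConstMaps (n : ℕ) : Set (MB n) := {f | ∃ c : Brandt n, f = xi c}

/-- `f` is an affine map: a sum of an endomorphism and a constant map. -/
def IsAffine {n : ℕ} (f : MB n) : Prop := ∃ g c, IsEndo g ∧ f = g + xi c

/-- `A^+(B_n)`: the subsemigroup of `(M(B_n), +)` generated by the affine maps. -/
def Aplus (n : ℕ) : AddSubsemigroup (MB n) := AddSubsemigroup.closure {f | IsAffine f}

/-- `A^+(B_n)` as a set of maps. -/
def AplusSet (n : ℕ) : Set (MB n) := (Aplus n : Set (MB n))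

/-- The support of `f`: the set of elements not mapped to `ϑ`. -/
def supp {n : ℕ} (f : MB n) : Set (Brandt n) := {a | f a ≠ Brandt.theta n}

/-- `X_k`: the set of `k`-support elements of `X`. -/
def supportPart {n : ℕ} (X : Set (MB n)) (k : ℕ) : Set (MB n) :=
  {f ∈ X | (supp f).ncard = k}

/-- A subset `U` of an additive semigroup is independent if no element of `U`
lies in the subsemigroup generated by the remaining elements of `U`. -/
def IndepSet {β : Type*} [Add β] (U : Set β) : Prop :=
  ∀ a ∈ U, a ∉ AddSubsemigroup.closure (U \ {a})

/-- The `n`-support map `(p, q; σ)`, sending `(i, p)` to `(iσ, q)` and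
everything else to `ϑ`. -/
def nMap {n : ℕ} (p q : Fin n) (σ : Equiv.Perm (Fin n)) : MB n := fun a =>
  Option.elim (α := Fin n × Fin n) a (Brandt.theta n)
    (fun x => if x.2 = p then Brandt.pair (σ x.1) q else Brandt.theta n)

/-- The singleton support map `⟨(k, l), α⟩`, sending `(k, l)` to `α` and
everything else to `ϑ`. -/
def sMap {n : ℕ} (k l : Fin n) (α : Brandt n) : MB n :=
  fun a => if a = Brandt.pair k l then α else Brandt.theta n

/-- The set `S = {ξ_(i, i+1) : i ∈ [n-1]} ∪ {ξ_(n, 1)}`, i.e. the constant maps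
`ξ_(i, i+1)` where the successor is taken cyclically in `[n]`. -/
def setS (n : ℕ) : Set (MB n) := {f | ∃ i : Fin n, f = xi (Brandt.pair i (finRotate n i))}

/-- The set `T = {g + h : g ∈ Aut(B_n), h ∈ S}`. -/
def setT (n : ℕ) : Set (MB n) := {f | ∃ g h, IsAuto g ∧ h ∈ setS n ∧ f = g + h}
open Fin.NatCast Fin.CommRing
/-- For `n ≥ 2`, the subsemigroup generated by `S` is exactly
the set of constant maps `C_{Bₙ}`. -/
theorem stmt_1 (n : ℕ) (hn : 2 ≤ n) :
    (AddSubsemigroup.closure (setS n) : Set (MB n)) = ConstMaps n := by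
  obtain ⟨m, rfl⟩ : ∃ m, n = m + 2 := ⟨n - 2, by omega⟩
  have hxi : ∀ a b : Brandt (m+2), xi a + xi b = xi (a + b) := fun a b => rfl
  have hrot : ∀ i : Fin (m+2), finRotate (m+2) i = i + 1 := fun i => finRotate_succ_apply i
  have hpadd : ∀ i j l : Fin (m+2),
      Brandt.pair i j + Brandt.pair j l = Brandt.pair i l := by
    intro i j l
    show Brandt.add (some (i, j)) (some (j, l)) = some (i, l)
    simp [Brandt.add]
  apply Set.Subset.antisymm
  · have hle : AddSubsemigroup.closure (setS (m+2)) ≤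
        { carrier := ConstMaps (m+2),
          add_mem' := by rintro a b ⟨c, rfl⟩ ⟨d, rfl⟩; exact ⟨c + d, rfl⟩ } := by
      apply AddSubsemigroup.closure_le.mpr
      rintro f ⟨i, rfl⟩
      exact ⟨_, rfl⟩
    exact fun f hf => hle hf
  · rintro f ⟨c, rfl⟩
    have key : ∀ k : ℕ, ∀ i : Fin (m+2),
        xi (Brandt.pair i (i + ((k:Fin (m+2)) + 1))) ∈
          AddSubsemigroup.closure (setS (m+2)) := by
      intro k
      induction k with
      | zero =>
        intro i
        have h := AddSubsemigroup.subset_closure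
          (show xi (Brandt.pair i (finRotate (m+2) i)) ∈ setS (m+2) from ⟨i, rfl⟩)
        rw [hrot] at h
        simpa using h
      | succ k ih =>
        intro i
        have hs := AddSubsemigroup.subset_closure
          (show xi (Brandt.pair (i + ((k:Fin (m+2)) + 1))
              (finRotate (m+2) (i + ((k:Fin (m+2)) + 1)))) ∈ setS (m+2) from ⟨_, rfl⟩)
        have h2 := AddSubsemigroup.add_mem _ (ih i) hs
        rw [hxi, hrot, hpadd] at h2
        have : i + ((k:Fin (m+2)) + 1) + 1 = i + (((k+1 : ℕ) : Fin (m+2)) + 1) := by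
          push_cast; ring
        rwa [this] at h2
    match c with
    | none =>
        have h1 := key 0 0
        have h2 := AddSubsemigroup.add_mem _ h1 h1
        rw [hxi] at h2
        have : Brandt.pair (0 : Fin (m+2)) (0 + ((0:ℕ) + 1)) +
            Brandt.pair (0 : Fin (m+2)) (0 + ((0:ℕ) + 1)) = Brandt.theta (m+2) := by
          show Brandt.add _ _ = _
          simp [Brandt.add, Brandt.pair, Brandt.theta, Fin.ext_iff]
        rwa [this] at h2
    | some (i, j) =>
        have h := key ((j - i - 1 : Fin (m+2)).val) i
        have heq : i + (((j - i - 1 : Fin (m+2)).val : Fin (m+2)) + 1) = j := by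
          rw [Fin.cast_val_eq_self]; ring
        rwa [heq] at h
end

section
/- For every integer n ≥ 2, if X ⊆ A^+(B_n) satisfies ⟨X⟩ = C_{B_n}, then ⟨X ∪ T⟩ = A^+(B_n), where T = {g + h : g ∈ Aut(B_n), h ∈ S}. -/
namespace Brandt
lemma theta_add {n : ℕ} (a : Brandt n) : theta n + a = theta n := rfl
lemma add_theta {n : ℕ} (a : Brandt n) : a + theta n = theta n := by
  cases a <;> rfl
lemma cases' {n : ℕ} (a : Brandt n) : a = theta n ∨ ∃ i j, a = pair i j := by
  cases a with
  | none => exact Or.inl rfl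
  | some x => exact Or.inr ⟨x.1, x.2, rfl⟩
lemma pair_add_pair {n : ℕ} (i j k l : Fin n) :
    (pair i j + pair k l : Brandt n) = if j = k then pair i l else theta n := rfl
lemma pair_ne_theta {n : ℕ} (i j : Fin n) : pair i j ≠ theta n := by
  intro h; exact Option.some_ne_none _ h
lemma add_pair_chain {n : ℕ} (x : Brandt n) (u v w : Fin n) :
    x + pair u w = (x + pair u v) + pair v w := by
  rcases cases' x with h | ⟨i, j, h⟩ <;> subst h
  · rfl
  · rw [pair_add_pair, pair_add_pair]
    by_cases hj : j = u
    · rw [if_pos hj, if_pos hj, pair_add_pair, if_pos rfl]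
    · rw [if_neg hj, if_neg hj]; rfl
end Brandt

/-- automorphism of `B_n` induced by a permutation of `[n]`. -/
def permMap {n : ℕ} (π : Equiv.Perm (Fin n)) : MB n :=
  fun a => Option.map (Prod.map π π) a

lemma permMap_theta {n : ℕ} (π : Equiv.Perm (Fin n)) :
    permMap π (Brandt.theta n) = Brandt.theta n := rfl

lemma permMap_pair {n : ℕ} (π : Equiv.Perm (Fin n)) (i j : Fin n) :
    permMap π (Brandt.pair i j) = Brandt.pair (π i) (π j) := rfl

lemma isEndo_permMap {n : ℕ} (π : Equiv.Perm (Fin n)) : IsEndo (permMap π) := by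
  intro a b
  rcases Brandt.cases' a with h | ⟨i, j, h⟩ <;> subst h
  · rfl
  · rcases Brandt.cases' b with h | ⟨k, l, h⟩ <;> subst h
    · rfl
    · rw [Brandt.pair_add_pair, permMap_pair, permMap_pair, Brandt.pair_add_pair]
      by_cases hjk : j = k
      · rw [if_pos hjk, if_pos (by rw [hjk]), permMap_pair]
      · rw [if_neg hjk, if_neg (fun h => hjk (π.injective h))]; rfl

lemma isAuto_permMap {n : ℕ} (π : Equiv.Perm (Fin n)) : IsAuto (permMap π) := by
  refine ⟨isEndo_permMap π, ?_⟩
  have : Function.LeftInverse (permMap π⁻¹) (permMap π) ∧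
      Function.RightInverse (permMap π⁻¹) (permMap π) := by
    constructor <;> intro a <;> rcases Brandt.cases' a with h | ⟨i, j, h⟩ <;> subst h <;>
      simp [permMap_theta, permMap_pair]
  exact ⟨this.1.injective, this.2.surjective⟩

lemma endo_classify {n : ℕ} (hn : 2 ≤ n) (g : MB n) (hg : IsEndo g) :
    (∃ c, g = xi c) ∨ ∃ π : Equiv.Perm (Fin n), g = permMap π := by
  have hnt : Nontrivial (Fin n) := Fin.nontrivial_iff_two_le.mpr hn
  by_cases h0 : g (Brandt.theta n) = Brandt.theta n
  · by_cases hz : ∃ i j, g (Brandt.pair i j) = Brandt.theta n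
    · -- g kills a pair hence everything
      obtain ⟨i, j, hij⟩ := hz
      left; refine ⟨Brandt.theta n, ?_⟩
      funext a
      rcases Brandt.cases' a with h | ⟨k, l, h⟩ <;> subst h
      · exact h0
      · have e1 : (Brandt.pair k i + (Brandt.pair i j + Brandt.pair j l) : Brandt n)
            = Brandt.pair k l := by
          rw [Brandt.pair_add_pair, if_pos rfl, Brandt.pair_add_pair, if_pos rfl]
        calc g (Brandt.pair k l)
            = g (Brandt.pair k i + (Brandt.pair i j + Brandt.pair j l)) := by rw [e1]
          _ = g (Brandt.pair k i) + (g (Brandt.pair i j) + g (Brandt.pair j l)) := by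
              rw [hg, hg]
          _ = Brandt.theta n := by rw [hij, Brandt.theta_add, Brandt.add_theta]
    · -- no pair is killed
      push_neg at hz
      have hex : ∀ i j : Fin n, ∃ u v, g (Brandt.pair i j) = Brandt.pair u v := by
        intro i j
        rcases Brandt.cases' (g (Brandt.pair i j)) with h | ⟨u, v, h⟩
        · exact absurd h (hz i j)
        · exact ⟨u, v, h⟩
      choose r s hrs using hex
      -- key compatibility facts
      have key : ∀ i j l : Fin n, s i j = r j l ∧ r i l = r i j ∧ s i l = s j l := by
        intro i j l
        have e1 : g (Brandt.pair i l) = g (Brandt.pair i j) + g (Brandt.pair j l) := by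
          rw [← hg, Brandt.pair_add_pair, if_pos rfl]
        rw [hrs, hrs, hrs, Brandt.pair_add_pair] at e1
        by_cases hc : s i j = r j l
        · rw [if_pos hc] at e1
          refine ⟨hc, ?_, ?_⟩ <;>
            · have := Option.some.inj e1
              simp only [Prod.mk.injEq] at this
              first | exact this.1 | exact this.2
        · rw [if_neg hc] at e1
          exact absurd e1 (Brandt.pair_ne_theta _ _)
      set ρ : Fin n → Fin n := fun i => r i i with hρ
      have hr : ∀ i j, r i j = ρ i := fun i j => ((key i j i).2.1).symm
      have hs : ∀ i j, s i j = ρ j := fun i j => ((key i j j).1).trans (hr j j)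
      have hgp : ∀ i j, g (Brandt.pair i j) = Brandt.pair (ρ i) (ρ j) := by
        intro i j; rw [hrs, hr, hs]
      have hinj : Function.Injective ρ := by
        intro i j hρij
        by_contra hij
        have e1 : (Brandt.pair i i + Brandt.pair j j : Brandt n) = Brandt.theta n := by
          rw [Brandt.pair_add_pair, if_neg hij]
        have e2 := hg (Brandt.pair i i) (Brandt.pair j j)
        rw [e1, h0, hgp, hgp, Brandt.pair_add_pair, if_pos hρij] at e2
        exact Brandt.pair_ne_theta _ _ e2.symm
      have hbij : Function.Bijective ρ := Finite.injective_iff_bijective.mp hinj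
      right
      refine ⟨Equiv.ofBijective ρ hbij, ?_⟩
      funext a
      rcases Brandt.cases' a with h | ⟨i, j, h⟩ <;> subst h
      · exact h0
      · rw [hgp, permMap_pair]; rfl
  · -- g θ ≠ θ : g is a constant idempotent
    rcases Brandt.cases' (g (Brandt.theta n)) with h | ⟨a, b, hab⟩
    · exact absurd h h0
    have hidem := hg (Brandt.theta n) (Brandt.theta n)
    rw [Brandt.theta_add, hab, Brandt.pair_add_pair] at hidem
    have hba : b = a := by
      by_contra hba
      rw [if_neg hba] at hidem
      exact Brandt.pair_ne_theta _ _ hidem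
    subst hba
    -- now show g = xi (pair b b)
    have hoff : ∀ i j : Fin n, i ≠ j → g (Brandt.pair i j) = Brandt.pair b b := by
      intro i j hij
      have e1 : (Brandt.pair i j + Brandt.pair i j : Brandt n) = Brandt.theta n := by
        rw [Brandt.pair_add_pair, if_neg (fun h => hij h.symm)]
      have e2 := hg (Brandt.pair i j) (Brandt.pair i j)
      rw [e1, hab] at e2
      rcases Brandt.cases' (g (Brandt.pair i j)) with h | ⟨u, v, h⟩
      · rw [h, Brandt.theta_add] at e2
        exact absurd e2 (Brandt.pair_ne_theta _ _)
      · rw [h, Brandt.pair_add_pair] at e2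
        by_cases hvu : v = u
        · rw [if_pos hvu] at e2
          have := Option.some.inj e2
          simp only [Prod.mk.injEq] at this
          rw [h, hvu, this.1]
        · rw [if_neg hvu] at e2
          exact absurd e2 (Brandt.pair_ne_theta _ _)
    left
    refine ⟨Brandt.pair b b, ?_⟩
    funext x
    rcases Brandt.cases' x with h | ⟨i, j, h⟩ <;> subst h
    · exact hab
    · by_cases hij : i = j
      · subst hij
        obtain ⟨j, hj⟩ := exists_ne i
        have e1 : (Brandt.pair i j + Brandt.pair j i : Brandt n) = Brandt.pair i i := by
          rw [Brandt.pair_add_pair, if_pos rfl]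
        have e2 := hg (Brandt.pair i j) (Brandt.pair j i)
        rw [e1, hoff i j (fun h => hj (h.symm)), hoff j i hj, Brandt.pair_add_pair,
          if_pos rfl] at e2
        exact e2
      · exact hoff i j hij


/-- For `n ≥ 2`, if `X ⊆ A⁺(Bₙ)` generates `C_{Bₙ}`, then
`X ∪ T` generates `A⁺(Bₙ)`. -/
theorem stmt_2 (n : ℕ) (hn : 2 ≤ n) (X : Set (MB n)) (hX : X ⊆ AplusSet n)
    (hgen : (AddSubsemigroup.closure X : Set (MB n)) = ConstMaps n) :
    (AddSubsemigroup.closure (X ∪ setT n) : Set (MB n)) = AplusSet n := by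
  have hconst : ∀ c : Brandt n, xi c ∈ AddSubsemigroup.closure (X ∪ setT n) := by
    intro c
    have h1 : xi c ∈ (AddSubsemigroup.closure X : Set (MB n)) := by
      rw [hgen]; exact ⟨c, rfl⟩
    exact AddSubsemigroup.closure_mono Set.subset_union_left h1
  have hT : ∀ f ∈ setT n, f ∈ AddSubsemigroup.closure (X ∪ setT n) := fun f hf =>
    AddSubsemigroup.subset_closure (Or.inr hf)
  apply Set.Subset.antisymm
  · have h2 : AddSubsemigroup.closure (X ∪ setT n) ≤ Aplus n := by
      rw [AddSubsemigroup.closure_le]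
      rintro f (hf | hf)
      · exact hX hf
      · obtain ⟨g, h, hg, ⟨i, rfl⟩, rfl⟩ := hf
        exact AddSubsemigroup.subset_closure
          ⟨g, Brandt.pair i (finRotate n i), hg.1, rfl⟩
    intro x hx; exact h2 hx
  · have h2 : Aplus n ≤ AddSubsemigroup.closure (X ∪ setT n) := by
      rw [Aplus, AddSubsemigroup.closure_le]
      rintro f ⟨g, c, hg, rfl⟩
      rcases endo_classify hn g hg with ⟨c₀, rfl⟩ | ⟨π, rfl⟩
      · have h3 : xi c₀ + xi c = xi (c₀ + c) := rfl
        rw [h3]; exact hconst _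
      · rcases Brandt.cases' c with hc | ⟨p, q, hc⟩ <;> subst hc
        · have h3 : permMap π + xi (Brandt.theta n) = xi (Brandt.theta n) := by
            funext a; exact Brandt.add_theta _
          rw [h3]; exact hconst _
        · have hp : p = π (π⁻¹ p) := (Equiv.apply_symm_apply π p).symm
          have hchain : permMap π + xi (Brandt.pair (π (π⁻¹ p)) q)
              = (permMap π + xi (Brandt.pair (π (π⁻¹ p)) (finRotate n (π (π⁻¹ p)))))
                + xi (Brandt.pair (finRotate n (π (π⁻¹ p))) q) := by
            funext a
            exact Brandt.add_pair_chain _ _ _ _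
          have ht : permMap π + xi (Brandt.pair (π (π⁻¹ p)) (finRotate n (π (π⁻¹ p))))
              ∈ setT n :=
            ⟨permMap π, xi (Brandt.pair (π (π⁻¹ p)) (finRotate n (π (π⁻¹ p)))),
              isAuto_permMap π, ⟨π (π⁻¹ p), rfl⟩, rfl⟩
          rw [hp, hchain]
          exact AddSubsemigroup.add_mem _ (hT _ ht) (hconst _)
    intro x hx; exact h2 hx
end

section
/- Let n ≥ 2 and f, f_1, …, f_k ∈ A^+(B_n) with f = f_1 + ⋯ + f_k. (1) If f is of full support (|supp(f)| = n²+1), say f = ξ_(p,q), then every f_i is a constant map ξ_(p_i,q_i) with p_1 = p and q_k = q (so f_1 is R-related to f and f_k is L-related to f). (2) If f is of n-support, say f = (k₀, q; σ), then f_1 = (k₀, r; σ) for some r ∈ [n] (so f_1 is R-related to f). -/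
/-- The sum `f 0 + f 1 + ⋯ + f k` of a nonempty finite sequence in an
additive structure. -/
def seqSum {β : Type*} [Add β] : (k : ℕ) → (Fin (k + 1) → β) → β
  | 0, f => f 0
  | (k + 1), f => f 0 + seqSum k (fun i => f i.succ)

section AuxLemmas

variable {n : ℕ}

lemma bcases (o : Brandt n) : o = Brandt.theta n ∨ ∃ i j : Fin n, o = Brandt.pair i j := by
  rcases o with _ | ⟨i, j⟩
  · exact Or.inl rfl
  · exact Or.inr ⟨i, j, rfl⟩

lemma pair_ne_theta {i j : Fin n} : Brandt.pair i j ≠ Brandt.theta n := by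
  intro h; cases h

lemma pair_inj {i j p q : Fin n} (h : Brandt.pair i j = Brandt.pair p q) : i = p ∧ j = q := by
  injection h with h2
  exact ⟨congrArg Prod.fst h2, congrArg Prod.snd h2⟩

lemma theta_add (a : Brandt n) : Brandt.theta n + a = Brandt.theta n := rfl

lemma add_theta (a : Brandt n) : a + Brandt.theta n = Brandt.theta n := by
  rcases a with _ | ⟨i, j⟩ <;> rfl

lemma pair_add_pair (i j k l : Fin n) :
    Brandt.pair i j + Brandt.pair k l =
      if j = k then Brandt.pair i l else Brandt.theta n := rfl

lemma pair_add_same (i j l : Fin n) :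
    Brandt.pair i j + Brandt.pair j l = Brandt.pair i l := by
  rw [pair_add_pair, if_pos rfl]

lemma pair_add_ne {j k : Fin n} (h : j ≠ k) (i l : Fin n) :
    Brandt.pair i j + Brandt.pair k l = Brandt.theta n := by
  rw [pair_add_pair, if_neg h]

lemma badd_eq_pair {a b : Brandt n} {p q : Fin n} (h : a + b = Brandt.pair p q) :
    ∃ j, a = Brandt.pair p j ∧ b = Brandt.pair j q := by
  rcases bcases a with rfl | ⟨i, j, rfl⟩
  · rw [theta_add] at h; exact absurd h.symm pair_ne_theta
  · rcases bcases b with rfl | ⟨k, l, rfl⟩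
    · rw [add_theta] at h; exact absurd h.symm pair_ne_theta
    · rw [pair_add_pair] at h
      split_ifs at h with hjk
      · obtain ⟨rfl, rfl⟩ := pair_inj h
        subst hjk
        exact ⟨j, rfl, rfl⟩
      · exact absurd h.symm pair_ne_theta

/-- An endomorphism not vanishing at `ϑ` is constant. -/
lemma endo_const {g : MB n} (hg : IsEndo g) (h : g (Brandt.theta n) ≠ Brandt.theta n) :
    ∃ c, g = xi c := by
  obtain ⟨i, j, hθ⟩ := (bcases (g (Brandt.theta n))).resolve_left h
  have h1 : g (Brandt.theta n) = g (Brandt.theta n) + g (Brandt.theta n) := by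
    have := hg (Brandt.theta n) (Brandt.theta n)
    rwa [theta_add] at this
  rw [hθ, pair_add_pair] at h1
  split_ifs at h1 with hji
  · subst hji
    refine ⟨g (Brandt.theta n), funext fun a => ?_⟩
    show g a = g (Brandt.theta n)
    have h2 : g (Brandt.theta n) = g a + g (Brandt.theta n) := by
      have := hg a (Brandt.theta n)
      rwa [add_theta] at this
    rw [hθ] at h2
    rcases bcases (g a) with ha | ⟨u, v, ha⟩
    · rw [ha, theta_add] at h2; exact absurd h2 pair_ne_theta
    · rw [ha, pair_add_pair] at h2
      split_ifs at h2 with hvj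
      · obtain ⟨hiu, -⟩ := pair_inj h2
        rw [ha, hθ, hvj, ← hiu]
      · exact absurd h2 pair_ne_theta
  · exact absurd h1 pair_ne_theta

lemma endo_key {g : MB n} (hg : IsEndo g) {x y a b : Fin n}
    (h : g (Brandt.pair x y) = Brandt.pair a b) :
    g (Brandt.pair x x) = Brandt.pair a a ∧ g (Brandt.pair y y) = Brandt.pair b b := by
  constructor
  · have e1 := hg (Brandt.pair x x) (Brandt.pair x y)
    rw [pair_add_same, h] at e1
    rcases bcases (g (Brandt.pair x x)) with hxx | ⟨u, v, hxx⟩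
    · rw [hxx, theta_add] at e1; exact absurd e1 pair_ne_theta
    · rw [hxx, pair_add_pair] at e1
      split_ifs at e1 with hva
      · obtain ⟨hau, -⟩ := pair_inj e1
        rw [hxx, hva, ← hau]
      · exact absurd e1 pair_ne_theta
  · have e2 := hg (Brandt.pair x y) (Brandt.pair y y)
    rw [pair_add_same, h] at e2
    rcases bcases (g (Brandt.pair y y)) with hyy | ⟨u, v, hyy⟩
    · rw [hyy, add_theta] at e2; exact absurd e2 pair_ne_theta
    · rw [hyy, pair_add_pair] at e2
      split_ifs at e2 with hbu
      · obtain ⟨-, hbv⟩ := pair_inj e2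
        rw [hyy, ← hbu, ← hbv]
      · exact absurd e2 pair_ne_theta

lemma diag_inj {g : MB n} (hg : IsEndo g) (hθ : g (Brandt.theta n) = Brandt.theta n)
    {x x' a : Fin n} (h1 : g (Brandt.pair x x) = Brandt.pair a a)
    (h2 : g (Brandt.pair x' x') = Brandt.pair a a) : x = x' := by
  by_contra hne
  have e := hg (Brandt.pair x x') (Brandt.pair x' x)
  rw [pair_add_same, h1] at e
  obtain ⟨j, hj1, hj2⟩ := badd_eq_pair e.symm
  have hk := (endo_key hg hj1).2
  rw [h2] at hk
  obtain ⟨hja, -⟩ := pair_inj hk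
  subst hja
  have e2 := hg (Brandt.pair x x') (Brandt.pair x x')
  rw [pair_add_ne (fun hc => hne hc.symm), hθ, hj1, pair_add_same] at e2
  exact absurd e2.symm pair_ne_theta

lemma endo_props {g : MB n} (hg : IsEndo g) (hθ : g (Brandt.theta n) = Brandt.theta n)
    {x y x' y' a b a' b' : Fin n} (h : g (Brandt.pair x y) = Brandt.pair a b)
    (h' : g (Brandt.pair x' y') = Brandt.pair a' b') :
    (x = x' ↔ a = a') ∧ (y = y' ↔ b = b') := by
  obtain ⟨k1, k2⟩ := endo_key hg h
  obtain ⟨k1', k2'⟩ := endo_key hg h'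
  constructor
  · constructor
    · rintro rfl
      rw [k1] at k1'
      exact (pair_inj k1'.symm).1.symm
    · rintro rfl
      exact diag_inj hg hθ k1 k1'
  · constructor
    · rintro rfl
      rw [k2] at k2'
      exact (pair_inj k2'.symm).1.symm
    · rintro rfl
      exact diag_inj hg hθ k2 k2'

/-- The second structural class of maps in `A⁺(Bₙ)`: `ϑ ↦ ϑ`; on the support the
second coordinate of the argument and of the value are constant, and the first
coordinate of the value is an injective function of the first coordinate of the
argument. -/
def P2 {n : ℕ} (f : MB n) : Prop :=
  f (Brandt.theta n) = Brandt.theta n ∧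
  ∀ x y x' y' a b a' b' : Fin n,
    f (Brandt.pair x y) = Brandt.pair a b → f (Brandt.pair x' y') = Brandt.pair a' b' →
      y = y' ∧ b = b' ∧ (x = x' ↔ a = a')

/-- The structural invariant of `A⁺(Bₙ)`: every element is constant or of class `P2`. -/
def Pcl {n : ℕ} (f : MB n) : Prop := (∃ c, f = xi c) ∨ P2 f

lemma Pcl_affine {f : MB n} (hf : IsAffine f) : Pcl f := by
  obtain ⟨g, c, hg, rfl⟩ := hf
  by_cases hθ : g (Brandt.theta n) = Brandt.theta n
  · rcases bcases c with rfl | ⟨c1, c2, rfl⟩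
    · exact Or.inl ⟨Brandt.theta n,
        funext fun a => show g a + Brandt.theta n = Brandt.theta n from add_theta _⟩
    · refine Or.inr ⟨?_, ?_⟩
      · show g (Brandt.theta n) + Brandt.pair c1 c2 = Brandt.theta n
        rw [hθ, theta_add]
      · intro x y x' y' a b a' b' h h'
        replace h : g (Brandt.pair x y) + Brandt.pair c1 c2 = Brandt.pair a b := h
        replace h' : g (Brandt.pair x' y') + Brandt.pair c1 c2 = Brandt.pair a' b' := h'
        obtain ⟨j, hj1, hj2⟩ := badd_eq_pair h
        obtain ⟨j', hj1', hj2'⟩ := badd_eq_pair h'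
        obtain ⟨hc1j, hc2b⟩ := pair_inj hj2
        obtain ⟨hc1j', hc2b'⟩ := pair_inj hj2'
        rw [← hc1j] at hj1
        rw [← hc1j'] at hj1'
        obtain ⟨e1, e2⟩ := endo_props hg hθ hj1 hj1'
        refine ⟨e2.mpr rfl, ?_, e1⟩
        rw [← hc2b, ← hc2b']
  · obtain ⟨e, he⟩ := endo_const hg hθ
    exact Or.inl ⟨e + c, funext fun a => show g a + c = e + c by rw [he]; rfl⟩

lemma Pcl_add {f g : MB n} (hf : Pcl f) (hg : Pcl g) : Pcl (f + g) := by
  rcases hf with ⟨c, rfl⟩ | ⟨hfθ, hfs⟩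
  · rcases hg with ⟨d, rfl⟩ | ⟨hgθ, hgs⟩
    · exact Or.inl ⟨c + d, rfl⟩
    · rcases bcases c with rfl | ⟨c1, c2, rfl⟩
      · exact Or.inl ⟨Brandt.theta n,
          funext fun a => show Brandt.theta n + g a = Brandt.theta n from theta_add _⟩
      · refine Or.inr ⟨?_, ?_⟩
        · show Brandt.pair c1 c2 + g (Brandt.theta n) = Brandt.theta n
          rw [hgθ, add_theta]
        · intro x y x' y' a b a' b' h h'
          replace h : Brandt.pair c1 c2 + g (Brandt.pair x y) = Brandt.pair a b := h
          replace h' : Brandt.pair c1 c2 + g (Brandt.pair x' y') = Brandt.pair a' b' := h'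
          obtain ⟨j, hj1, hj2⟩ := badd_eq_pair h
          obtain ⟨j', hj1', hj2'⟩ := badd_eq_pair h'
          obtain ⟨hc1a, hc2j⟩ := pair_inj hj1
          obtain ⟨hc1a', hc2j'⟩ := pair_inj hj1'
          rw [← hc2j] at hj2
          rw [← hc2j'] at hj2'
          obtain ⟨hy, hb, hx⟩ := hgs x y x' y' c2 b c2 b' hj2 hj2'
          refine ⟨hy, hb, ?_, fun _ => hx.mpr rfl⟩
          intro _
          rw [← hc1a, ← hc1a']
  · rcases hg with ⟨d, rfl⟩ | ⟨hgθ, hgs⟩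
    · rcases bcases d with rfl | ⟨d1, d2, rfl⟩
      · exact Or.inl ⟨Brandt.theta n,
          funext fun a => show f a + Brandt.theta n = Brandt.theta n from add_theta _⟩
      · refine Or.inr ⟨?_, ?_⟩
        · show f (Brandt.theta n) + Brandt.pair d1 d2 = Brandt.theta n
          rw [hfθ, theta_add]
        · intro x y x' y' a b a' b' h h'
          replace h : f (Brandt.pair x y) + Brandt.pair d1 d2 = Brandt.pair a b := h
          replace h' : f (Brandt.pair x' y') + Brandt.pair d1 d2 = Brandt.pair a' b' := h'
          obtain ⟨j, hj1, hj2⟩ := badd_eq_pair h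
          obtain ⟨j', hj1', hj2'⟩ := badd_eq_pair h'
          obtain ⟨hd1j, hd2b⟩ := pair_inj hj2
          obtain ⟨hd1j', hd2b'⟩ := pair_inj hj2'
          rw [← hd1j] at hj1
          rw [← hd1j'] at hj1'
          obtain ⟨hy, -, hx⟩ := hfs x y x' y' a d1 a' d1 hj1 hj1'
          refine ⟨hy, ?_, hx⟩
          rw [← hd2b, ← hd2b']
    · refine Or.inr ⟨?_, ?_⟩
      · show f (Brandt.theta n) + g (Brandt.theta n) = Brandt.theta n
        rw [hfθ, hgθ, theta_add]
      · intro x y x' y' a b a' b' h h'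
        replace h : f (Brandt.pair x y) + g (Brandt.pair x y) = Brandt.pair a b := h
        replace h' : f (Brandt.pair x' y') + g (Brandt.pair x' y') = Brandt.pair a' b' := h'
        obtain ⟨j, hj1, hj2⟩ := badd_eq_pair h
        obtain ⟨j', hj1', hj2'⟩ := badd_eq_pair h'
        obtain ⟨hy, -, hx⟩ := hfs x y x' y' a j a' j' hj1 hj1'
        obtain ⟨-, hb, -⟩ := hgs x y x' y' j b j' b' hj2 hj2'
        exact ⟨hy, hb, hx⟩

lemma Pcl_of_mem {f : MB n} (hf : f ∈ Aplus n) : Pcl f :=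
  AddSubsemigroup.closure_induction (fun _ hx => Pcl_affine hx)
    (fun _ _ _ _ hx hy => Pcl_add hx hy) hf

lemma seqSum_apply {k : ℕ} (f : Fin (k + 1) → MB n) (a : Brandt n) :
    seqSum k f a = seqSum k (fun i => f i a) := by
  induction k with
  | zero => rfl
  | succ k ih =>
    show f 0 a + (seqSum k fun i => f i.succ) a = _
    rw [ih]
    rfl

lemma seqSum_chain : ∀ (k : ℕ) (g : Fin (k + 1) → Brandt n) (p q : Fin n),
    seqSum k g = Brandt.pair p q →
    (∃ x, g 0 = Brandt.pair p x) ∧ (∃ y, g (Fin.last k) = Brandt.pair y q) ∧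
      ∀ i, g i ≠ Brandt.theta n := by
  intro k
  induction k with
  | zero =>
    intro g p q h
    refine ⟨⟨q, h⟩, ⟨p, h⟩, fun i hc => ?_⟩
    rw [Fin.fin_one_eq_zero i] at hc
    exact absurd ((Eq.symm h).trans hc) pair_ne_theta
  | succ k ih =>
    intro g p q h
    replace h : g 0 + seqSum k (fun i => g i.succ) = Brandt.pair p q := h
    obtain ⟨j, h0, ht⟩ := badd_eq_pair h
    obtain ⟨-, ⟨y, hy⟩, hall⟩ := ih (fun i => g i.succ) j q ht
    refine ⟨⟨j, h0⟩, ⟨y, ?_⟩, fun i => ?_⟩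
    · rw [← Fin.succ_last]
      exact hy
    · refine Fin.cases ?_ (fun i2 => hall i2) i
      exact fun hc => absurd ((Eq.symm h0).trans hc) pair_ne_theta

end AuxLemmas

/-- Let `n ≥ 2` and `f = f₁ + ⋯ + f_k` with all `f_i ∈ A⁺(Bₙ)`.
(1) If `f` is of full support, say `f = ξ_(p,q)`, then every `f_i` is a constant
map `ξ_(p_i, q_i)` with `p_1 = p` and `q_k = q` (so `f₁ R f` and `f_k L f`).
(2) If `f` is of `n`-support, say `f = (k₀, q; σ)`, then `f₁ = (k₀, r; σ)` for
some `r ∈ [n]` (so `f₁ R f`). -/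
theorem stmt_4 (n : ℕ) (hn : 2 ≤ n) (k : ℕ) (f : Fin (k + 1) → MB n)
    (hf : ∀ i, f i ∈ Aplus n) :
    (∀ p q : Fin n, seqSum k f = xi (Brandt.pair p q) →
      ∃ c : Fin (k + 1) → Fin n × Fin n,
        (∀ i, f i = xi (Brandt.pair (c i).1 (c i).2)) ∧
        (c 0).1 = p ∧ (c (Fin.last k)).2 = q) ∧
    (∀ (k₀ q : Fin n) (σ : Equiv.Perm (Fin n)), seqSum k f = nMap k₀ q σ →
      ∃ r : Fin n, f 0 = nMap k₀ r σ) := by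
  have hn0 : 0 < n := by omega
  have hn1 : 1 < n := by omega
  constructor
  · intro p q h
    have hθv : seqSum k (fun i => f i (Brandt.theta n)) = Brandt.pair p q := by
      have h2 := congrFun h (Brandt.theta n)
      rw [seqSum_apply] at h2
      exact h2
    obtain ⟨⟨x0, hx0⟩, ⟨yl, hyl⟩, hall⟩ := seqSum_chain k _ p q hθv
    have hconst : ∀ i, ∃ d : Fin n × Fin n, f i = xi (Brandt.pair d.1 d.2) := by
      intro i
      rcases Pcl_of_mem (hf i) with ⟨c, hc⟩ | ⟨h2θ, -⟩
      · rcases bcases c with rfl | ⟨a, b, rfl⟩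
        · exact absurd (show f i (Brandt.theta n) = Brandt.theta n by rw [hc]; rfl) (hall i)
        · exact ⟨(a, b), hc⟩
      · exact absurd h2θ (hall i)
    choose c hc using hconst
    refine ⟨c, hc, ?_, ?_⟩
    · exact (pair_inj ((congrFun (hc 0) (Brandt.theta n)).symm.trans hx0)).1
    · exact (pair_inj ((congrFun (hc (Fin.last k)) (Brandt.theta n)).symm.trans hyl)).2
  · intro k₀ q σ h
    have hx : ∀ i : Fin n, ∃ x, f 0 (Brandt.pair i k₀) = Brandt.pair (σ i) x := by
      intro i
      have hv : seqSum k (fun j => f j (Brandt.pair i k₀)) = Brandt.pair (σ i) q := by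
        have h2 := congrFun h (Brandt.pair i k₀)
        rw [seqSum_apply] at h2
        rw [h2]
        show (if k₀ = k₀ then Brandt.pair (σ i) q else Brandt.theta n) = _
        rw [if_pos rfl]
      exact (seqSum_chain k _ _ _ hv).1
    choose x hxs using hx
    rcases Pcl_of_mem (hf 0) with ⟨c, hc⟩ | ⟨h2θ, hcls⟩
    · exfalso
      have e0 := hxs ⟨0, hn0⟩
      have e1 := hxs ⟨1, hn1⟩
      rw [hc] at e0 e1
      have e01 : Brandt.pair (σ ⟨0, hn0⟩) (x ⟨0, hn0⟩) = Brandt.pair (σ ⟨1, hn1⟩) (x ⟨1, hn1⟩) :=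
        e0.symm.trans e1
      have h01 : (⟨0, hn0⟩ : Fin n) = ⟨1, hn1⟩ := σ.injective (pair_inj e01).1
      have h01' : (0 : ℕ) = 1 := congrArg Fin.val h01
      exact absurd h01' (by omega)
    · refine ⟨x ⟨0, hn0⟩, funext fun a => ?_⟩
      rcases bcases a with rfl | ⟨u, v, rfl⟩
      · exact h2θ
      · by_cases hv : v = k₀
        · subst hv
          have hR : nMap v (x ⟨0, hn0⟩) σ (Brandt.pair u v) = Brandt.pair (σ u) (x ⟨0, hn0⟩) := by
            show (if v = v then Brandt.pair (σ u) (x ⟨0, hn0⟩) else Brandt.theta n) = _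
            rw [if_pos rfl]
          rw [hR]
          obtain ⟨-, hb, -⟩ :=
            hcls u v ⟨0, hn0⟩ v (σ u) (x u) (σ ⟨0, hn0⟩) (x ⟨0, hn0⟩) (hxs u) (hxs ⟨0, hn0⟩)
          rw [hxs u, hb]
        · have hR : nMap k₀ (x ⟨0, hn0⟩) σ (Brandt.pair u v) = Brandt.theta n := by
            show (if v = k₀ then Brandt.pair (σ u) (x ⟨0, hn0⟩) else Brandt.theta n) = _
            rw [if_neg hv]
          rw [hR]
          rcases bcases (f 0 (Brandt.pair u v)) with he | ⟨a1, b1, he⟩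
          · exact he
          · exact absurd
              (hcls u v ⟨0, hn0⟩ k₀ a1 b1 (σ ⟨0, hn0⟩) (x ⟨0, hn0⟩) he (hxs ⟨0, hn0⟩)).1 hv
end

section
/- For every integer n ≥ 2, the set S ∪ T is a generating set of A^+(B_n) of minimum cardinality: ⟨S ∪ T⟩ = A^+(B_n), |S ∪ T| = n(n! + 1), and every generating set of A^+(B_n) has at least n(n! + 1) elements. -/
namespace Stmt6Aux
open Brandt
variable {n : ℕ}


lemma brandt_cases (a : Brandt n) : a = theta n ∨ ∃ i j, a = pair i j := by
  rcases a with _ | ⟨i, j⟩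
  · exact Or.inl rfl
  · exact Or.inr ⟨i, j, rfl⟩

@[simp] lemma theta_add (a : Brandt n) : theta n + a = theta n := rfl

@[simp] lemma add_theta (a : Brandt n) : a + theta n = theta n := by
  rcases a with _ | ⟨i, j⟩ <;> rfl

lemma pair_add_pair (i j k l : Fin n) :
    pair i j + pair k l = if j = k then pair i l else theta n := rfl

@[simp] lemma pair_ne_theta (i j : Fin n) : pair i j ≠ theta n := by
  intro h; exact Option.some_ne_none _ h

@[simp] lemma pair_inj {i j k l : Fin n} : pair i j = pair k l ↔ i = k ∧ j = l := by
  constructor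
  · intro h
    have := Option.some_injective _ h
    exact ⟨congrArg Prod.fst this, congrArg Prod.snd this⟩
  · rintro ⟨rfl, rfl⟩; rfl

lemma add_eq_pair_left {a b : Brandt n} {x y : Fin n} (h : a + b = pair x y) :
    ∃ m, a = pair x m ∧ b = pair m y := by
  rcases a with _ | ⟨i, j⟩
  · exact absurd h.symm (pair_ne_theta _ _)
  · rcases b with _ | ⟨k, l⟩
    · exact absurd ((add_theta (pair i j)) ▸ h).symm (pair_ne_theta x y)
    · rw [show (some (i,j) : Brandt n) = pair i j from rfl,
        show (some (k,l) : Brandt n) = pair k l from rfl, pair_add_pair] at h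
      by_cases hjk : j = k
      · subst hjk
        rw [if_pos rfl] at h
        obtain ⟨rfl, rfl⟩ := pair_inj.mp h
        exact ⟨j, rfl, rfl⟩
      · rw [if_neg hjk] at h; exact absurd h.symm (pair_ne_theta _ _)

lemma MB.add_apply (f g : MB n) (a : Brandt n) : (f + g) a = f a + g a := rfl

@[simp] lemma xi_apply (c : Brandt n) (a : Brandt n) : xi c a = c := rfl

@[simp] lemma nMap_theta (p q : Fin n) (σ : Equiv.Perm (Fin n)) :
    nMap p q σ (theta n) = theta n := rfl

lemma nMap_pair (p q : Fin n) (σ : Equiv.Perm (Fin n)) (i j : Fin n) :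
    nMap p q σ (pair i j) = if j = p then pair (σ i) q else theta n := rfl

lemma sMap_apply (k l : Fin n) (α : Brandt n) (a : Brandt n) :
    sMap k l α a = if a = pair k l then α else theta n := rfl


/-- the automorphism of `B_n` induced by a permutation. -/
def mapPerm {n : ℕ} (σ : Equiv.Perm (Fin n)) : MB n := fun a =>
  Option.map (Prod.map σ σ) a


@[simp] lemma mapPerm_theta (σ : Equiv.Perm (Fin n)) : mapPerm σ (theta n) = theta n := rfl

@[simp] lemma mapPerm_pair (σ : Equiv.Perm (Fin n)) (i j : Fin n) :
    mapPerm σ (pair i j) = pair (σ i) (σ j) := rfl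

lemma isEndo_mapPerm (σ : Equiv.Perm (Fin n)) : IsEndo (mapPerm σ) := by
  intro a b
  rcases brandt_cases a with rfl | ⟨i, j, rfl⟩
  · simp
  rcases brandt_cases b with rfl | ⟨k, l, rfl⟩
  · simp
  by_cases h : j = k
  · subst h; rw [pair_add_pair, if_pos rfl, mapPerm_pair, mapPerm_pair, mapPerm_pair,
      pair_add_pair, if_pos rfl]
  · rw [pair_add_pair, if_neg h, mapPerm_theta, mapPerm_pair, mapPerm_pair, pair_add_pair,
      if_neg (fun hc => h (σ.injective hc))]

lemma isAuto_mapPerm (σ : Equiv.Perm (Fin n)) : IsAuto (mapPerm σ) := by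
  refine ⟨isEndo_mapPerm σ, Function.bijective_iff_has_inverse.mpr ⟨mapPerm σ.symm, ?_, ?_⟩⟩ <;>
  · intro a
    rcases brandt_cases a with rfl | ⟨i, j, rfl⟩ <;> simp

lemma xi_add_xi (c d : Brandt n) : xi c + xi d = xi (c + d) := rfl

@[simp] lemma xiTheta_add (f : MB n) : xi (theta n) + f = xi (theta n) := by
  funext a; rw [MB.add_apply, xi_apply, theta_add]

@[simp] lemma add_xiTheta (f : MB n) : f + xi (theta n) = xi (theta n) := by
  funext a; rw [MB.add_apply, xi_apply, add_theta]

lemma xi_add_nMap (u v p q : Fin n) (σ : Equiv.Perm (Fin n)) :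
    xi (pair u v) + nMap p q σ = sMap (σ.symm v) p (pair u q) := by
  funext a
  rw [MB.add_apply, xi_apply, sMap_apply]
  rcases brandt_cases a with rfl | ⟨i, j, rfl⟩
  · rw [nMap_theta, add_theta, if_neg (fun hc => pair_ne_theta _ _ hc.symm)]
  · rw [nMap_pair]
    by_cases hj : j = p
    · subst hj
      rw [if_pos rfl, pair_add_pair]
      by_cases hv : v = σ i
      · have hi : i = σ.symm v := by rw [hv, Equiv.symm_apply_apply]
        rw [if_pos hv, if_pos (pair_inj.mpr ⟨hi, rfl⟩)]
      · rw [if_neg hv,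
          if_neg (fun hc => hv (by rw [(pair_inj.mp hc).1, Equiv.apply_symm_apply]))]
    · rw [if_neg hj, add_theta, if_neg (fun hc => hj (pair_inj.mp hc).2)]

lemma nMap_add_xi_eq (p q v : Fin n) (σ : Equiv.Perm (Fin n)) :
    nMap p q σ + xi (pair q v) = nMap p v σ := by
  funext a
  rw [MB.add_apply, xi_apply]
  rcases brandt_cases a with rfl | ⟨i, j, rfl⟩
  · rw [nMap_theta, nMap_theta, theta_add]
  · rw [nMap_pair, nMap_pair]
    by_cases hj : j = p
    · rw [if_pos hj, if_pos hj, pair_add_pair, if_pos rfl]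
    · rw [if_neg hj, if_neg hj, theta_add]

lemma nMap_add_xi_ne (p q u v : Fin n) (σ : Equiv.Perm (Fin n)) (h : q ≠ u) :
    nMap p q σ + xi (pair u v) = xi (theta n) := by
  funext a
  rw [MB.add_apply, xi_apply, xi_apply]
  rcases brandt_cases a with rfl | ⟨i, j, rfl⟩
  · rw [nMap_theta, theta_add]
  · rw [nMap_pair]
    by_cases hj : j = p
    · rw [if_pos hj, pair_add_pair, if_neg h]
    · rw [if_neg hj, theta_add]

lemma nMap_add_nMap_eq (p q q' : Fin n) (σ σ' : Equiv.Perm (Fin n)) :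
    nMap p q σ + nMap p q' σ' = sMap (σ'.symm q) p (pair (σ (σ'.symm q)) q') := by
  funext a
  rw [MB.add_apply, sMap_apply]
  rcases brandt_cases a with rfl | ⟨i, j, rfl⟩
  · rw [nMap_theta, nMap_theta, theta_add, if_neg (fun hc => pair_ne_theta _ _ hc.symm)]
  · rw [nMap_pair, nMap_pair]
    by_cases hj : j = p
    · subst hj
      rw [if_pos rfl, if_pos rfl, pair_add_pair]
      by_cases hi : i = σ'.symm q
      · subst hi
        rw [if_pos (Equiv.apply_symm_apply σ' q).symm, if_pos rfl]
      · rw [if_neg (fun hc => hi ((Equiv.eq_symm_apply σ').mpr hc.symm)),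
          if_neg (fun hc => hi (pair_inj.mp hc).1)]
    · rw [if_neg hj, if_neg hj, theta_add, if_neg (fun hc => hj (pair_inj.mp hc).2)]

lemma nMap_add_nMap_ne (p q p' q' : Fin n) (σ σ' : Equiv.Perm (Fin n)) (h : p ≠ p') :
    nMap p q σ + nMap p' q' σ' = xi (theta n) := by
  funext a
  rw [MB.add_apply, xi_apply]
  rcases brandt_cases a with rfl | ⟨i, j, rfl⟩
  · rw [nMap_theta, nMap_theta, theta_add]
  · rw [nMap_pair, nMap_pair]
    by_cases hj : j = p
    · rw [if_pos hj, if_neg (fun hc : j = p' => h (hj ▸ hc)), add_theta]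
    · rw [if_neg hj, theta_add]

lemma sMap_add (k l : Fin n) (α : Brandt n) (f : MB n) :
    sMap k l α + f = sMap k l (α + f (pair k l)) := by
  funext a
  rw [MB.add_apply, sMap_apply, sMap_apply]
  by_cases h : a = pair k l
  · subst h; rw [if_pos rfl, if_pos rfl]
  · rw [if_neg h, if_neg h, theta_add]

lemma add_sMap (k l : Fin n) (α : Brandt n) (f : MB n) :
    f + sMap k l α = sMap k l (f (pair k l) + α) := by
  funext a
  rw [MB.add_apply, sMap_apply, sMap_apply]
  by_cases h : a = pair k l
  · subst h; rw [if_pos rfl, if_pos rfl]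
  · rw [if_neg h, if_neg h, add_theta]

lemma sMap_theta_eq (k l : Fin n) : sMap k l (theta n) = xi (theta n) := by
  funext a; rw [sMap_apply, xi_apply]; by_cases h : a = pair k l
  · rw [if_pos h]
  · rw [if_neg h]

lemma mapPerm_add_xi (σ : Equiv.Perm (Fin n)) (u v : Fin n) :
    mapPerm σ + xi (pair u v) = nMap (σ.symm u) v σ := by
  funext a
  rw [MB.add_apply, xi_apply]
  rcases brandt_cases a with rfl | ⟨i, j, rfl⟩
  · rw [mapPerm_theta, theta_add, nMap_theta]
  · rw [mapPerm_pair, nMap_pair, pair_add_pair]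
    by_cases h : j = σ.symm u
    · rw [if_pos h, if_pos (by rw [h, Equiv.apply_symm_apply])]
    · rw [if_neg h, if_neg (fun hc => h ((Equiv.eq_symm_apply σ).mpr hc))]

lemma mapPerm_add_xiTheta (σ : Equiv.Perm (Fin n)) :
    mapPerm σ + xi (theta n) = xi (theta n) := add_xiTheta _



/-- The structural description of `A⁺(Bₙ)`. -/
def Amaps (n : ℕ) : Set (MB n) :=
  {f | (∃ c, f = xi c) ∨ (∃ p q σ, f = nMap p q σ) ∨
    ∃ k l a b, f = sMap k l (Brandt.pair a b)}

lemma xi_mem_amaps (c : Brandt n) : xi c ∈ Amaps n := Or.inl ⟨c, rfl⟩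

lemma nMap_mem_amaps (p q : Fin n) (σ : Equiv.Perm (Fin n)) : nMap p q σ ∈ Amaps n :=
  Or.inr (Or.inl ⟨p, q, σ, rfl⟩)

lemma sMap_mem_amaps (k l : Fin n) (α : Brandt n) : sMap k l α ∈ Amaps n := by
  rcases brandt_cases α with rfl | ⟨a, b, rfl⟩
  · rw [sMap_theta_eq]; exact xi_mem_amaps _
  · exact Or.inr (Or.inr ⟨k, l, a, b, rfl⟩)

lemma amaps_add_mem {f g : MB n} (hf : f ∈ Amaps n) (hg : g ∈ Amaps n) :
    f + g ∈ Amaps n := by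
  rcases hf with ⟨c, rfl⟩ | ⟨p, q, σ, rfl⟩ | ⟨k, l, a, b, rfl⟩
  · rcases brandt_cases c with rfl | ⟨u, v, rfl⟩
    · rw [xiTheta_add]; exact xi_mem_amaps _
    · rcases hg with ⟨d, rfl⟩ | ⟨p, q, σ, rfl⟩ | ⟨k, l, a, b, rfl⟩
      · rw [xi_add_xi]; exact xi_mem_amaps _
      · rw [xi_add_nMap]; exact sMap_mem_amaps _ _ _
      · rw [add_sMap]; exact sMap_mem_amaps _ _ _
  · rcases hg with ⟨d, rfl⟩ | ⟨p', q', σ', rfl⟩ | ⟨k, l, a, b, rfl⟩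
    · rcases brandt_cases d with rfl | ⟨u, v, rfl⟩
      · rw [add_xiTheta]; exact xi_mem_amaps _
      · by_cases h : q = u
        · subst h; rw [nMap_add_xi_eq]; exact nMap_mem_amaps _ _ _
        · rw [nMap_add_xi_ne _ _ _ _ _ h]; exact xi_mem_amaps _
    · by_cases h : p = p'
      · subst h; rw [nMap_add_nMap_eq]; exact sMap_mem_amaps _ _ _
      · rw [nMap_add_nMap_ne _ _ _ _ _ _ h]; exact xi_mem_amaps _
    · rw [add_sMap]; exact sMap_mem_amaps _ _ _
  · rw [sMap_add]; exact sMap_mem_amaps _ _ _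

/-- Classification of endomorphisms of `B_n`. -/
lemma endo_class {g : MB n} (hg : IsEndo g) :
    g = xi (theta n) ∨ (∃ e : Fin n, g = xi (pair e e)) ∨
      ∃ σ : Equiv.Perm (Fin n), g = mapPerm σ := by
  have hθ : g (theta n) = g (theta n) + g (theta n) := by
    have h := hg (theta n) (theta n)
    rwa [theta_add] at h
  rcases brandt_cases (g (theta n)) with h0 | ⟨x, y, h0⟩
  · -- g θ = θ
    by_cases hz : ∃ i j : Fin n, g (pair i j) = theta n
    · left
      obtain ⟨i0, j0, hij⟩ := hz
      funext a
      rcases brandt_cases a with rfl | ⟨i, j, rfl⟩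
      · rw [h0, xi_apply]
      · have e1 : pair i j = (pair i i0 + pair i0 j0) + pair j0 j := by
          rw [pair_add_pair, if_pos rfl, pair_add_pair, if_pos rfl]
        rw [e1, hg, hg, hij, add_theta, theta_add, xi_apply]
    · push_neg at hz
      right; right
      have he : ∀ i : Fin n, ∃ e, g (pair i i) = pair e e := by
        intro i
        rcases brandt_cases (g (pair i i)) with h | ⟨e, f, hef⟩
        · exact absurd h (hz i i)
        · have h2 : g (pair i i) = g (pair i i) + g (pair i i) := by
            have h3 := hg (pair i i) (pair i i)
            rwa [pair_add_pair, if_pos rfl] at h3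
          rw [hef, pair_add_pair] at h2
          by_cases hfe : f = e
          · exact ⟨e, by rw [hef, hfe]⟩
          · rw [if_neg hfe] at h2; exact absurd (hef.trans h2) (hz i i)
      choose e he using he
      have hg2 : ∀ i j : Fin n, g (pair i j) = pair (e i) (e j) := by
        intro i j
        obtain ⟨x, y, hxy⟩ := (brandt_cases (g (pair i j))).resolve_left (hz i j)
        obtain ⟨u, v, huv⟩ := (brandt_cases (g (pair j i))).resolve_left (hz j i)
        have h1 : g (pair i j) + g (pair j i) = pair (e i) (e i) := by
          rw [← hg, pair_add_pair, if_pos rfl, he]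
        have h2 : g (pair j i) + g (pair i j) = pair (e j) (e j) := by
          rw [← hg, pair_add_pair, if_pos rfl, he]
        rw [hxy, huv, pair_add_pair] at h1
        rw [huv, hxy, pair_add_pair] at h2
        by_cases hyu : y = u
        · rw [if_pos hyu] at h1
          by_cases hvx : v = x
          · rw [if_pos hvx] at h2
            obtain ⟨hx, hv⟩ := pair_inj.mp h1
            obtain ⟨hu, hy⟩ := pair_inj.mp h2
            rw [hxy, hx, hyu, hu]
          · rw [if_neg hvx] at h2; exact absurd h2.symm (pair_ne_theta _ _)
        · rw [if_neg hyu] at h1; exact absurd h1.symm (pair_ne_theta _ _)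
      have hinj : Function.Injective e := by
        intro i j hij
        by_contra hne
        have h4 : g (pair i j + pair i j) = theta n := by
          rw [pair_add_pair, if_neg (fun hc : j = i => hne (hc ▸ rfl)), h0]
        rw [hg, hg2, pair_add_pair, if_pos hij.symm] at h4
        exact pair_ne_theta _ _ h4
      refine ⟨Equiv.ofBijective e (Finite.injective_iff_bijective.mp hinj), funext fun a => ?_⟩
      rcases brandt_cases a with rfl | ⟨i, j, rfl⟩
      · rw [h0, mapPerm_theta]
      · rw [hg2, mapPerm_pair, Equiv.ofBijective_apply, Equiv.ofBijective_apply]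
  · -- g θ = pair x y
    have hyx : y = x := by
      rw [h0, pair_add_pair] at hθ
      by_cases h : y = x
      · exact h
      · rw [if_neg h] at hθ; exact absurd hθ (pair_ne_theta _ _)
    subst hyx
    right; left
    refine ⟨y, funext fun a => ?_⟩
    have ha : g a + pair y y = pair y y := by
      have h5 := hg a (theta n)
      rw [add_theta, h0] at h5
      exact h5.symm
    rcases brandt_cases (g a) with h6 | ⟨u, v, h6⟩
    · rw [h6, theta_add] at ha; exact absurd ha.symm (pair_ne_theta _ _)
    · rw [h6, pair_add_pair] at ha
      by_cases hv : v = y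
      · rw [if_pos hv] at ha
        rw [xi_apply, h6, hv, (pair_inj.mp ha).1]
      · rw [if_neg hv] at ha; exact absurd ha.symm (pair_ne_theta _ _)

lemma xi_isEndo_idem (i : Fin n) : IsEndo (xi (pair i i) : MB n) := by
  intro a b
  rw [xi_apply, xi_apply, xi_apply, pair_add_pair, if_pos rfl]

lemma xi_isAffine (c : Brandt n) : IsAffine (xi c : MB n) := by
  rcases brandt_cases c with rfl | ⟨i, j, rfl⟩
  · refine ⟨xi (theta n), theta n, fun a b => by rw [xi_apply, xi_apply, xi_apply, theta_add], ?_⟩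
    rw [add_xiTheta]
  · refine ⟨xi (pair i i), pair i j, xi_isEndo_idem i, ?_⟩
    rw [xi_add_xi, pair_add_pair, if_pos rfl]

lemma nMap_isAffine (p q : Fin n) (σ : Equiv.Perm (Fin n)) : IsAffine (nMap p q σ) := by
  refine ⟨mapPerm σ, pair (σ p) q, isEndo_mapPerm σ, ?_⟩
  rw [mapPerm_add_xi, Equiv.symm_apply_apply]

lemma affine_mem_amaps {f : MB n} (hf : IsAffine f) : f ∈ Amaps n := by
  obtain ⟨g, c, hg, rfl⟩ := hf
  rcases endo_class hg with rfl | ⟨e, rfl⟩ | ⟨σ, rfl⟩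
  · rw [xiTheta_add]; exact xi_mem_amaps _
  · rw [xi_add_xi]; exact xi_mem_amaps _
  · rcases brandt_cases c with rfl | ⟨u, v, rfl⟩
    · rw [mapPerm_add_xiTheta]; exact xi_mem_amaps _
    · rw [mapPerm_add_xi]; exact nMap_mem_amaps _ _ _

/-- `Amaps` as a subsemigroup. -/
def AmapsSub (n : ℕ) : AddSubsemigroup (MB n) where
  carrier := Amaps n
  add_mem' := amaps_add_mem

lemma sMap_eq_sum (k l a b : Fin n) :
    sMap k l (pair a b) = xi (pair a k) + nMap l b 1 := by
  rw [xi_add_nMap]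
  rfl

lemma amaps_subset_aplus : Amaps n ⊆ AplusSet n := by
  rintro f (⟨c, rfl⟩ | ⟨p, q, σ, rfl⟩ | ⟨k, l, a, b, rfl⟩)
  · exact AddSubsemigroup.subset_closure (xi_isAffine c)
  · exact AddSubsemigroup.subset_closure (nMap_isAffine p q σ)
  · rw [sMap_eq_sum]
    exact AddSubsemigroup.add_mem _
      (AddSubsemigroup.subset_closure (xi_isAffine _))
      (AddSubsemigroup.subset_closure (nMap_isAffine _ _ _))

lemma aplus_eq_amaps : AplusSet n = Amaps n := by
  apply le_antisymm
  · intro f hf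
    have h : Aplus n ≤ AmapsSub n :=
      AddSubsemigroup.closure_le.mpr (fun f hf => affine_mem_amaps hf)
    exact h hf
  · exact amaps_subset_aplus



lemma rot_apply (hn : 2 ≤ n) [NeZero n] (a : Fin n) : finRotate n a = a + 1 := by
  rcases n with _ | m
  · exact a.elim0
  · exact finRotate_succ_apply a

open Fin.NatCast in
lemma xi_pair_mem (hn : 2 ≤ n) (a b : Fin n) :
    xi (pair a b) ∈ AddSubsemigroup.closure (setS n) := by
  haveI : NeZero n := ⟨by omega⟩
  have key : ∀ k : ℕ, ∀ a : Fin n,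
      xi (pair a (a + ((k + 1 : ℕ) : Fin n))) ∈ AddSubsemigroup.closure (setS n) := by
    intro k
    induction k with
    | zero =>
      intro a
      refine AddSubsemigroup.subset_closure ⟨a, ?_⟩
      rw [rot_apply hn]
      norm_num
    | succ k ih =>
      intro a
      have h1 := ih a
      have h2 : xi (pair (a + ((k + 1 : ℕ) : Fin n))
          ((a + ((k + 1 : ℕ) : Fin n)) + 1)) ∈ AddSubsemigroup.closure (setS n) := by
        refine AddSubsemigroup.subset_closure ⟨a + ((k + 1 : ℕ) : Fin n), ?_⟩
        rw [rot_apply hn]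
      have h3 := AddSubsemigroup.add_mem _ h1 h2
      rw [xi_add_xi, pair_add_pair, if_pos rfl] at h3
      have h4 : ((k + 1 + 1 : ℕ) : Fin n) = ((k + 1 : ℕ) : Fin n) + 1 := by push_cast; ring
      rw [h4, ← add_assoc]
      exact h3
  obtain ⟨k, hk⟩ : ∃ k : ℕ, a + ((k + 1 : ℕ) : Fin n) = b := by
    by_cases hab : b = a
    · refine ⟨n - 1, ?_⟩
      rw [Nat.sub_add_cancel (by omega), Fin.natCast_self, add_zero, hab]
    · refine ⟨(b - a).val - 1, ?_⟩
      have h1 : (b - a).val ≠ 0 := by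
        intro h
        exact hab (sub_eq_zero.mp (Fin.ext (by rw [h, Fin.val_zero])))
      rw [Nat.sub_add_cancel (Nat.one_le_iff_ne_zero.mpr h1), Fin.cast_val_eq_self,
        add_comm, sub_add_cancel]
  rw [← hk]
  exact key k a

lemma xi_theta_mem (hn : 2 ≤ n) :
    xi (theta n) ∈ AddSubsemigroup.closure (setS n) := by
  have h01 : (⟨1, by omega⟩ : Fin n) ≠ (⟨0, by omega⟩ : Fin n) := by
    simp [Fin.ext_iff]
  have h := AddSubsemigroup.add_mem _ (xi_pair_mem hn ⟨0, by omega⟩ ⟨1, by omega⟩)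
    (xi_pair_mem hn ⟨0, by omega⟩ ⟨1, by omega⟩)
  rwa [xi_add_xi, pair_add_pair, if_neg h01] at h

lemma xi_mem_closure (hn : 2 ≤ n) (c : Brandt n) :
    xi c ∈ AddSubsemigroup.closure (setS n) := by
  rcases brandt_cases c with rfl | ⟨a, b, rfl⟩
  · exact xi_theta_mem hn
  · exact xi_pair_mem hn a b

lemma nMap_decomp (hn : 2 ≤ n) (p q : Fin n) (σ : Equiv.Perm (Fin n)) :
    nMap p q σ = (mapPerm σ + xi (pair (σ p) (finRotate n (σ p)))) +
      xi (pair (finRotate n (σ p)) q) := by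
  rw [mapPerm_add_xi, Equiv.symm_apply_apply, nMap_add_xi_eq]

lemma ST_subset_affine : setS n ∪ setT n ⊆ {f : MB n | IsAffine f} := by
  rintro f (⟨i, rfl⟩ | ⟨g, h, hg, ⟨i, rfl⟩, rfl⟩)
  · exact xi_isAffine _
  · exact ⟨g, pair i (finRotate n i), hg.1, rfl⟩

lemma hmono_ST : AddSubsemigroup.closure (setS n) ≤
    AddSubsemigroup.closure (setS n ∪ setT n) :=
  AddSubsemigroup.closure_mono Set.subset_union_left

lemma nMap_mem_closure_ST (hn : 2 ≤ n) (p q : Fin n) (σ : Equiv.Perm (Fin n)) :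
    nMap p q σ ∈ AddSubsemigroup.closure (setS n ∪ setT n) := by
  rw [nMap_decomp hn]
  refine AddSubsemigroup.add_mem _ (AddSubsemigroup.subset_closure ?_)
    (hmono_ST (xi_mem_closure hn _))
  exact Or.inr ⟨mapPerm σ, xi (pair (σ p) (finRotate n (σ p))), isAuto_mapPerm σ,
    ⟨σ p, rfl⟩, rfl⟩

lemma amaps_subset_closure_ST (hn : 2 ≤ n) :
    Amaps n ⊆ (AddSubsemigroup.closure (setS n ∪ setT n) : Set (MB n)) := by
  rintro f (⟨c, rfl⟩ | ⟨p, q, σ, rfl⟩ | ⟨k, l, a, b, rfl⟩)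
  · exact hmono_ST (xi_mem_closure hn c)
  · exact nMap_mem_closure_ST hn p q σ
  · rw [sMap_eq_sum]
    exact AddSubsemigroup.add_mem _ (hmono_ST (xi_mem_closure hn _))
      (nMap_mem_closure_ST hn _ _ _)

lemma closure_ST_eq (hn : 2 ≤ n) :
    (AddSubsemigroup.closure (setS n ∪ setT n) : Set (MB n)) = AplusSet n := by
  apply Set.Subset.antisymm
  · exact SetLike.coe_subset_coe.mpr (AddSubsemigroup.closure_le.mpr
      (fun f hf => AddSubsemigroup.subset_closure (ST_subset_affine hf)))
  · rw [aplus_eq_amaps]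
    exact amaps_subset_closure_ST hn


lemma nMap_eq_iff (hn : 2 ≤ n) {p p' q q' : Fin n} {σ σ' : Equiv.Perm (Fin n)}
    (h : nMap p q σ = nMap p' q' σ') : p = p' ∧ q = q' ∧ σ = σ' := by
  have hp : p = p' := by
    have h1 := congrFun h (pair ⟨0, by omega⟩ p)
    rw [nMap_pair, nMap_pair, if_pos rfl] at h1
    by_cases hpp : p = p'
    · exact hpp
    · rw [if_neg hpp] at h1; exact absurd h1 (pair_ne_theta _ _)
  subst hp
  have hq : ∀ i : Fin n, σ i = σ' i ∧ q = q' := by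
    intro i
    have h1 := congrFun h (pair i p)
    rw [nMap_pair, nMap_pair, if_pos rfl, if_pos rfl] at h1
    exact pair_inj.mp h1
  exact ⟨rfl, (hq ⟨0, by omega⟩).2, Equiv.ext fun i => (hq i).1⟩

/-- the canonical parametrization of `S`. -/
def fS (n : ℕ) : Fin n → MB n := fun i => xi (pair i (finRotate n i))

/-- the canonical parametrization of `T`. -/
def fT (n : ℕ) : Equiv.Perm (Fin n) × Fin n → MB n :=
  fun x => mapPerm x.1 + xi (pair x.2 (finRotate n x.2))

lemma setS_eq : setS n = Set.range (fS n) := Set.ext fun f =>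
  ⟨fun ⟨i, h⟩ => ⟨i, h.symm⟩, fun ⟨i, h⟩ => ⟨i, h.symm⟩⟩

lemma auto_class (hn : 2 ≤ n) {g : MB n} (hg : IsAuto g) :
    ∃ σ : Equiv.Perm (Fin n), g = mapPerm σ := by
  rcases endo_class hg.1 with rfl | ⟨e, rfl⟩ | h
  · exact absurd (hg.2.1 (show xi (theta n) (theta n) =
      xi (theta n) (pair ⟨0, by omega⟩ ⟨0, by omega⟩) from rfl)).symm (pair_ne_theta _ _)
  · exact absurd (hg.2.1 (show xi (pair e e) (theta n) =
      xi (pair e e) (pair ⟨0, by omega⟩ ⟨0, by omega⟩) from rfl)).symm (pair_ne_theta _ _)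
  · exact h

lemma setT_eq (hn : 2 ≤ n) : setT n = Set.range (fT n) := by
  ext f
  constructor
  · rintro ⟨g, h, hg, ⟨i, rfl⟩, rfl⟩
    obtain ⟨σ, rfl⟩ := auto_class hn hg
    exact ⟨(σ, i), rfl⟩
  · rintro ⟨⟨σ, i⟩, rfl⟩
    exact ⟨mapPerm σ, xi (pair i (finRotate n i)), isAuto_mapPerm σ, ⟨i, rfl⟩, rfl⟩

lemma fS_inj : Function.Injective (fS n) := fun i j h =>
  (pair_inj.mp (congrFun h (theta n))).1

lemma fT_eq (σ : Equiv.Perm (Fin n)) (i : Fin n) :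
    fT n (σ, i) = nMap (σ.symm i) (finRotate n i) σ := mapPerm_add_xi σ i (finRotate n i)

lemma fT_inj (hn : 2 ≤ n) : Function.Injective (fT n) := by
  rintro ⟨σ, i⟩ ⟨τ, j⟩ h
  rw [fT_eq, fT_eq] at h
  obtain ⟨h1, h2, h3⟩ := nMap_eq_iff hn h
  subst h3
  have hij : i = j := (finRotate n).injective h2
  rw [hij]

lemma ST_disjoint (hn : 2 ≤ n) : Disjoint (setS n) (setT n) := by
  rw [Set.disjoint_left]
  rintro f ⟨i, rfl⟩ ⟨g, h, hg, ⟨j, rfl⟩, hfeq⟩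
  obtain ⟨σ, rfl⟩ := auto_class hn hg
  have h0 := congrFun hfeq (theta n)
  rw [xi_apply, MB.add_apply, mapPerm_theta, theta_add] at h0
  exact pair_ne_theta _ _ h0

lemma card_ST (hn : 2 ≤ n) : (setS n ∪ setT n).ncard = n * (n.factorial + 1) := by
  rw [Set.ncard_union_eq (ST_disjoint hn) (Set.toFinite _) (Set.toFinite _),
    setS_eq, setT_eq hn, ← Nat.card_coe_set_eq, ← Nat.card_coe_set_eq,
    Nat.card_range_of_injective fS_inj, Nat.card_range_of_injective (fT_inj hn),
    Nat.card_eq_fintype_card, Nat.card_eq_fintype_card, Fintype.card_fin,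
    Fintype.card_prod, Fintype.card_perm, Fintype.card_fin]
  ring

/-! ### Lower bound -/

lemma const_gen {V : Set (MB n)} (hV : V ⊆ Amaps n) {f : MB n}
    (hf : f ∈ AddSubsemigroup.closure V) :
    f ∈ Amaps n ∧ ∀ a b : Fin n, f = xi (pair a b) →
      ∃ v ∈ V, ∃ x, v = xi (pair a x) := by
  induction hf using AddSubsemigroup.closure_induction with
  | mem v hv => exact ⟨hV hv, fun a b h => ⟨v, hv, b, h⟩⟩
  | add f g hfc hgc ihf ihg =>
    refine ⟨amaps_add_mem ihf.1 ihg.1, fun a b h => ?_⟩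
    have h0 := congrFun h (theta n)
    rw [MB.add_apply, xi_apply] at h0
    obtain ⟨m, hm, _⟩ := add_eq_pair_left h0
    have hfc' : ∃ c, f = xi c := by
      rcases ihf.1 with ⟨c, rfl⟩ | ⟨p, q, σ, rfl⟩ | ⟨k, l, u, w, rfl⟩
      · exact ⟨c, rfl⟩
      · rw [nMap_theta] at hm; exact absurd hm.symm (pair_ne_theta _ _)
      · rw [sMap_apply, if_neg (fun hc => pair_ne_theta k l hc.symm)] at hm
        exact absurd hm.symm (pair_ne_theta _ _)
    obtain ⟨c, rfl⟩ := hfc'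
    rw [xi_apply] at hm
    exact ihf.2 a m (by rw [hm])

lemma nmap_gen (hn : 2 ≤ n) {V : Set (MB n)} (hV : V ⊆ Amaps n) {f : MB n}
    (hf : f ∈ AddSubsemigroup.closure V) :
    f ∈ Amaps n ∧ ∀ (p q : Fin n) (σ : Equiv.Perm (Fin n)), f = nMap p q σ →
      ∃ v ∈ V, ∃ q', v = nMap p q' σ := by
  induction hf using AddSubsemigroup.closure_induction with
  | mem v hv => exact ⟨hV hv, fun p q σ h => ⟨v, hv, q, h⟩⟩
  | add f g hfc hgc ihf ihg =>
    refine ⟨amaps_add_mem ihf.1 ihg.1, fun p q σ h => ?_⟩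
    have key : ∃ q', f = nMap p q' σ := by
      rcases ihf.1 with ⟨c, rfl⟩ | ⟨p', q', σ', rfl⟩ | ⟨k, l, u, w, rfl⟩
      · exfalso
        rcases brandt_cases c with rfl | ⟨u, v, rfl⟩
        · have h0 := congrFun h (pair ⟨0, by omega⟩ p)
          rw [MB.add_apply, xi_apply, theta_add, nMap_pair, if_pos rfl] at h0
          exact pair_ne_theta _ _ h0.symm
        · have h0 := congrFun h (pair ⟨0, by omega⟩ p)
          have h1 := congrFun h (pair ⟨1, by omega⟩ p)
          rw [MB.add_apply, xi_apply, nMap_pair, if_pos rfl] at h0 h1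
          obtain ⟨m0, hm0, _⟩ := add_eq_pair_left h0
          obtain ⟨m1, hm1, _⟩ := add_eq_pair_left h1
          have hu0 : u = σ ⟨0, by omega⟩ := (pair_inj.mp hm0).1
          have hu1 : u = σ ⟨1, by omega⟩ := (pair_inj.mp hm1).1
          have : σ ⟨0, by omega⟩ = σ ⟨1, by omega⟩ := hu0 ▸ hu1
          have h01 := σ.injective this
          simp [Fin.ext_iff] at h01
      · -- f is an nMap
        have hp : p' = p := by
          by_contra hpp
          have h0 := congrFun h (pair ⟨0, by omega⟩ p)
          rw [MB.add_apply, nMap_pair, if_neg (fun hc : p = p' => hpp hc.symm),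
            theta_add, nMap_pair, if_pos rfl] at h0
          exact pair_ne_theta _ _ h0.symm
        subst hp
        have hσ : ∀ i : Fin n, σ' i = σ i := by
          intro i
          have h0 := congrFun h (pair i p')
          rw [MB.add_apply, nMap_pair, if_pos rfl, nMap_pair, if_pos rfl] at h0
          obtain ⟨m, hm, _⟩ := add_eq_pair_left h0
          exact (pair_inj.mp hm).1
        exact ⟨q', by rw [show σ' = σ from Equiv.ext hσ]⟩
      · exfalso
        obtain ⟨i, hi⟩ : ∃ i : Fin n, pair i p ≠ pair k l := by
          rcases eq_or_ne (⟨0, by omega⟩ : Fin n) k with h0 | h0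
          · refine ⟨⟨1, by omega⟩, fun hc => ?_⟩
            have h1 := (pair_inj.mp hc).1
            rw [← h0] at h1
            simp [Fin.ext_iff] at h1
          · exact ⟨⟨0, by omega⟩, fun hc => h0 (pair_inj.mp hc).1⟩
        have h0 := congrFun h (pair i p)
        rw [MB.add_apply, sMap_apply, if_neg hi, theta_add, nMap_pair, if_pos rfl] at h0
        exact pair_ne_theta _ _ h0.symm
    obtain ⟨q', hq'⟩ := key
    exact ihf.2 p q' σ hq'

lemma lower_bound (hn : 2 ≤ n) (V : Set (MB n)) (hV : V ⊆ AplusSet n)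
    (hgen : (AddSubsemigroup.closure V : Set (MB n)) = AplusSet n) :
    n * (n.factorial + 1) ≤ V.ncard := by
  have hVA : V ⊆ Amaps n := aplus_eq_amaps ▸ hV
  have hconst : ∀ a : Fin n, ∃ v ∈ V, ∃ x, v = xi (pair a x) := by
    intro a
    have hmem : xi (pair a a) ∈ AddSubsemigroup.closure V := by
      have h1 : xi (pair a a) ∈ AplusSet n := amaps_subset_aplus (xi_mem_amaps _)
      rw [← hgen] at h1
      exact h1
    exact (const_gen hVA hmem).2 a a rfl
  have hnm : ∀ x : Fin n × Equiv.Perm (Fin n), ∃ v ∈ V, ∃ q, v = nMap x.1 q x.2 := by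
    rintro ⟨p, σ⟩
    have hmem : nMap p p σ ∈ AddSubsemigroup.closure V := by
      have h1 : nMap p p σ ∈ AplusSet n := amaps_subset_aplus (nMap_mem_amaps _ _ _)
      rw [← hgen] at h1
      exact h1
    exact (nmap_gen hn hVA hmem).2 p p σ rfl
  choose vc hvc xc hxc using hconst
  choose vn hvn qn hqn using hnm
  set F : (Fin n ⊕ Fin n × Equiv.Perm (Fin n)) → MB n := Sum.elim vc vn with hF
  have hrange : Set.range F ⊆ V := by
    rintro _ ⟨x, rfl⟩
    rcases x with a | x
    · exact hvc a
    · exact hvn x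
  have hFinj : Function.Injective F := by
    have hne : ∀ (a : Fin n) (x : Fin n × Equiv.Perm (Fin n)), vc a ≠ vn x := by
      intro a x hc
      have h0 := congrFun hc (theta n)
      rw [hxc, hqn, xi_apply, nMap_theta] at h0
      exact pair_ne_theta _ _ h0
    rintro (a | x) (b | y) h
    · rw [show F (Sum.inl a) = vc a from rfl, show F (Sum.inl b) = vc b from rfl,
        hxc, hxc] at h
      rw [(pair_inj.mp (congrFun h (theta n))).1]
    · exact absurd (show vc a = vn y from h) (hne a y)
    · exact absurd (show vn x = vc b from h).symm (hne b x)
    · rw [show F (Sum.inr x) = vn x from rfl, show F (Sum.inr y) = vn y from rfl,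
        hqn, hqn] at h
      obtain ⟨h1, h2, h3⟩ := nMap_eq_iff hn h
      rw [show x = y from Prod.ext h1 h3]
  calc n * (n.factorial + 1)
      = Nat.card (Fin n ⊕ Fin n × Equiv.Perm (Fin n)) := by
        rw [Nat.card_eq_fintype_card, Fintype.card_sum, Fintype.card_prod,
          Fintype.card_perm, Fintype.card_fin]
        ring
    _ = Nat.card (Set.range F) := (Nat.card_range_of_injective hFinj).symm
    _ = (Set.range F).ncard := Nat.card_coe_set_eq _
    _ ≤ V.ncard := Set.ncard_le_ncard hrange (Set.toFinite V)

end Stmt6Aux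

/-- For `n ≥ 2`, `S ∪ T` is a generating set of `A⁺(Bₙ)` of
minimum cardinality `n(n! + 1)`. -/
theorem stmt_6 (n : ℕ) (hn : 2 ≤ n) :
    (AddSubsemigroup.closure (setS n ∪ setT n) : Set (MB n)) = AplusSet n ∧
    (setS n ∪ setT n).ncard = n * (n.factorial + 1) ∧
    (∀ V : Set (MB n), V ⊆ AplusSet n →
      (AddSubsemigroup.closure V : Set (MB n)) = AplusSet n →
      n * (n.factorial + 1) ≤ V.ncard) := by
  exact ⟨Stmt6Aux.closure_ST_eq hn, Stmt6Aux.card_ST hn,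
    fun V hV hgen => Stmt6Aux.lower_bound hn V hV hgen⟩
end

section
/- For every integer n ≥ 2, the set A^+(B_n)_n of all n-support elements of A^+(B_n) is an independent subset of A^+(B_n) of cardinality (n!)·n². -/
namespace Stmt12
open Brandt

variable {n : ℕ}

lemma add_apply (f g : MB n) (a : Brandt n) : (f + g) a = f a + g a := rfl

lemma brandt_cases (a : Brandt n) : a = theta n ∨ ∃ i j, a = pair i j := by
  rcases a with _ | ⟨i, j⟩
  · exact Or.inl rfl
  · exact Or.inr ⟨i, j, rfl⟩

lemma theta_add (a : Brandt n) : theta n + a = theta n := rfl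

lemma add_theta (a : Brandt n) : a + theta n = theta n := by
  rcases a with _ | ⟨i, j⟩ <;> rfl

lemma pair_add_pair (i j k l : Fin n) :
    pair i j + pair k l = if j = k then pair i l else theta n := rfl

lemma pair_ne_theta (i j : Fin n) : pair i j ≠ theta n := by
  intro h; exact Option.some_ne_none _ h

lemma pair_inj {i j k l : Fin n} (h : pair i j = pair k l) : i = k ∧ j = l := by
  have := Option.some_injective _ h
  exact ⟨congrArg Prod.fst this, congrArg Prod.snd this⟩

lemma idem_cases {a : Brandt n} (h : a + a = a) : a = theta n ∨ ∃ t, a = pair t t := by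
  rcases brandt_cases a with rfl | ⟨i, j, rfl⟩
  · exact Or.inl rfl
  · right
    refine ⟨i, ?_⟩
    rw [pair_add_pair] at h
    by_cases hji : j = i
    · subst hji; rfl
    · rw [if_neg hji] at h; exact absurd h.symm (pair_ne_theta _ _)

lemma sq_eq_idem {a : Brandt n} {t : Fin n} (h : a + a = pair t t) : a = pair t t := by
  rcases brandt_cases a with rfl | ⟨i, j, rfl⟩
  · exact absurd h.symm (pair_ne_theta _ _)
  · rw [pair_add_pair] at h
    by_cases hji : j = i
    · subst hji
      rw [if_pos rfl] at h
      obtain ⟨h1, h2⟩ := pair_inj h; subst h1; rfl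
    · rw [if_neg hji] at h; exact absurd h.symm (pair_ne_theta _ _)

end Stmt12
namespace Stmt12
open Brandt

variable {n : ℕ}

lemma endo_classify (hn : 2 ≤ n) {g : MB n} (hg : IsEndo g) :
    (∃ c, g = xi c) ∨
    ∃ σ : Equiv.Perm (Fin n),
      g (theta n) = theta n ∧ ∀ i j, g (pair i j) = pair (σ i) (σ j) := by
  have i0 : Fin n := ⟨0, by omega⟩
  have i1 : Fin n := ⟨1, by omega⟩
  have h01 : (⟨0, by omega⟩ : Fin n) ≠ ⟨1, by omega⟩ := by
    simp [Fin.ext_iff]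
  have hθθ : (theta n : Brandt n) + theta n = theta n := rfl
  have hgθ : g (theta n) + g (theta n) = g (theta n) := by
    rw [← hg]; rfl
  rcases idem_cases hgθ with hθ | ⟨t, hθ⟩
  · -- g θ = θ
    by_cases hdiag : ∃ i, g (pair i i) = theta n
    · -- g is constant θ
      obtain ⟨i, hi⟩ := hdiag
      left
      refine ⟨theta n, funext fun a => ?_⟩
      rcases brandt_cases a with rfl | ⟨k, l, rfl⟩
      · exact hθ
      · have h1 : g (pair k i) = theta n := by
          have := hg (pair k i) (pair i i)
          rw [pair_add_pair, if_pos rfl, hi, add_theta] at this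
          exact this
        have := hg (pair k i) (pair i l)
        rw [pair_add_pair, if_pos rfl, h1, theta_add] at this
        exact this
    · push_neg at hdiag
      have ht : ∀ i, ∃ ti, g (pair i i) = pair ti ti := by
        intro i
        have hii : g (pair i i) + g (pair i i) = g (pair i i) := by
          rw [← hg, pair_add_pair, if_pos rfl]
        rcases idem_cases hii with h | ⟨t, h⟩
        · exact absurd h (hdiag i)
        · exact ⟨t, h⟩
      choose t ht using ht
      have hoff : ∀ i j, g (pair i j) = pair (t i) (t j) := by
        intro i j
        have hne : g (pair i j) ≠ theta n := by
          intro hc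
          apply pair_ne_theta (t i) (t i)
          rw [← ht i]
          have := hg (pair i j) (pair j i)
          rw [pair_add_pair, if_pos rfl, hc, theta_add] at this
          exact this
        rcases brandt_cases (g (pair i j)) with hc | ⟨u, v, hc⟩
        · exact absurd hc hne
        · have h1 : g (pair i j) = pair (t i) v := by
            have := hg (pair i i) (pair i j)
            rw [pair_add_pair, if_pos rfl, ht, hc, pair_add_pair] at this
            by_cases htu : t i = u
            · rw [if_pos htu] at this; exact hc.trans this
            · rw [if_neg htu] at this; exact absurd this (pair_ne_theta _ _)
          have h2 : g (pair i j) = pair u (t j) := by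
            have := hg (pair i j) (pair j j)
            rw [pair_add_pair, if_pos rfl, ht, hc, pair_add_pair] at this
            by_cases hvt : v = t j
            · rw [if_pos hvt] at this; exact hc.trans this
            · rw [if_neg hvt] at this; exact absurd this (pair_ne_theta _ _)
          rw [h1, (pair_inj (h1.symm.trans h2)).2]
      have hinj : Function.Injective t := by
        intro j k hjk
        by_contra hne
        have := hg (pair j j) (pair k k)
        rw [pair_add_pair, if_neg hne, hθ, hoff, hoff, pair_add_pair, if_pos hjk] at this
        exact pair_ne_theta _ _ this.symm
      right
      exact ⟨Equiv.ofBijective t (Finite.injective_iff_bijective.mp hinj), hθ, fun i j => by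
        simpa [Equiv.ofBijective] using hoff i j⟩
  · -- g θ = (t,t): g constant
    left
    refine ⟨pair t t, funext fun a => ?_⟩
    have hoffd : ∀ i j : Fin n, i ≠ j → g (pair i j) = pair t t := by
      intro i j hij
      apply sq_eq_idem
      rw [← hg, pair_add_pair, if_neg (Ne.symm hij), hθ]
    rcases brandt_cases a with rfl | ⟨i, j, rfl⟩
    · exact hθ
    · by_cases hij : i = j
      · subst hij
        obtain ⟨k, hk⟩ : ∃ k, i ≠ k := by
          by_cases h : i = ⟨0, by omega⟩
          · exact ⟨⟨1, by omega⟩, h ▸ h01⟩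
          · exact ⟨⟨0, by omega⟩, h⟩
        have := hg (pair i k) (pair k i)
        rw [pair_add_pair, if_pos rfl, hoffd i k hk, hoffd k i (Ne.symm hk),
          pair_add_pair, if_pos rfl] at this
        exact this
      · exact hoffd i j hij

end Stmt12
namespace Stmt12
open Brandt

variable {n : ℕ}

def Good {n : ℕ} (f : MB n) : Prop :=
  (∃ c, f = xi c) ∨ (∃ p q σ, f = nMap p q σ) ∨ (∃ k l α, f = sMap k l α)

lemma nMap_theta (p q : Fin n) (σ : Equiv.Perm (Fin n)) :
    nMap p q σ (theta n) = theta n := rfl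

lemma nMap_pair (p q : Fin n) (σ : Equiv.Perm (Fin n)) (i j : Fin n) :
    nMap p q σ (pair i j) = if j = p then pair (σ i) q else theta n := rfl

lemma sMap_apply (k l : Fin n) (α : Brandt n) (a : Brandt n) :
    sMap k l α a = if a = pair k l then α else theta n := rfl

lemma xi_apply (c : Brandt n) (a : Brandt n) : xi c a = c := rfl

/-- nMap is affine. -/
lemma nMap_affine (p q : Fin n) (σ : Equiv.Perm (Fin n)) : IsAffine (nMap p q σ) := by
  refine ⟨fun a => Option.map (fun x => (σ x.1, σ x.2)) a, pair (σ p) q, ?_, ?_⟩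
  · intro a b
    rcases brandt_cases a with rfl | ⟨i, j, rfl⟩
    · rfl
    rcases brandt_cases b with rfl | ⟨k, l, rfl⟩
    · rw [add_theta]
      show theta n = _ + theta n
      exact (add_theta _).symm
    · show (fun a : Brandt n => (Option.map (fun x => (σ x.1, σ x.2)) a : Brandt n))
          (if j = k then pair i l else theta n)
        = pair (σ i) (σ j) + pair (σ k) (σ l)
      rw [pair_add_pair]
      by_cases hjk : j = k
      · rw [if_pos hjk, if_pos (congrArg σ hjk)]; rfl
      · rw [if_neg hjk, if_neg (fun h => hjk (σ.injective h))]; rfl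
  · funext a
    rcases brandt_cases a with rfl | ⟨i, j, rfl⟩
    · rfl
    · show nMap p q σ (pair i j) = pair (σ i) (σ j) + pair (σ p) q
      rw [nMap_pair, pair_add_pair]
      by_cases hjp : j = p
      · rw [if_pos hjp, if_pos (congrArg σ hjp)]
      · rw [if_neg hjp, if_neg (fun h => hjp (σ.injective h))]

/-- Every affine map is Good. -/
lemma affine_good (hn : 2 ≤ n) {f : MB n} (hf : IsAffine f) : Good f := by
  obtain ⟨g, c, hg, rfl⟩ := hf
  rcases endo_classify hn hg with ⟨d, rfl⟩ | ⟨σ, hθ, hσ⟩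
  · exact Or.inl ⟨d + c, rfl⟩
  · rcases brandt_cases c with rfl | ⟨c₁, c₂, rfl⟩
    · refine Or.inl ⟨theta n, funext fun a => ?_⟩
      show g a + theta n = theta n
      exact add_theta _
    · refine Or.inr (Or.inl ⟨σ.symm c₁, c₂, σ, funext fun a => ?_⟩)
      show g a + pair c₁ c₂ = nMap (σ.symm c₁) c₂ σ a
      rcases brandt_cases a with rfl | ⟨i, j, rfl⟩
      · rw [hθ, theta_add]; rfl
      · rw [hσ, nMap_pair, pair_add_pair]
        by_cases hj : j = σ.symm c₁
        · rw [if_pos hj, if_pos (by rw [hj, Equiv.apply_symm_apply])]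
        · rw [if_neg hj, if_neg (fun h => hj (by rw [← σ.symm_apply_apply j, h]))]

lemma add_sMap (f : MB n) (k l : Fin n) (α : Brandt n) :
    f + sMap k l α = sMap k l (f (pair k l) + α) := by
  funext a
  rw [add_apply, sMap_apply, sMap_apply]
  by_cases h : a = pair k l
  · rw [if_pos h, if_pos h, h]
  · rw [if_neg h, if_neg h, add_theta]

lemma sMap_add (f : MB n) (k l : Fin n) (α : Brandt n) :
    sMap k l α + f = sMap k l (α + f (pair k l)) := by
  funext a
  rw [add_apply, sMap_apply, sMap_apply]
  by_cases h : a = pair k l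
  · rw [if_pos h, if_pos h, h]
  · rw [if_neg h, if_neg h, theta_add]

lemma xi_add_xi (c d : Brandt n) : (xi c + xi d : MB n) = xi (c + d) := rfl

lemma xi_theta_add (f : MB n) : xi (theta n) + f = xi (theta n) := rfl

lemma xi_pair_add_nMap (c₁ c₂ p q : Fin n) (σ : Equiv.Perm (Fin n)) :
    xi (pair c₁ c₂) + nMap p q σ = sMap (σ.symm c₂) p (pair c₁ q) := by
  funext a
  rw [add_apply, xi_apply, sMap_apply]
  rcases brandt_cases a with rfl | ⟨i, j, rfl⟩
  · rw [nMap_theta, add_theta, if_neg (Ne.symm (pair_ne_theta _ _))]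
  · rw [nMap_pair]
    by_cases hjp : j = p
    · rw [if_pos hjp, pair_add_pair]
      by_cases hi : i = σ.symm c₂
      · rw [if_pos (by rw [hi, Equiv.apply_symm_apply]), if_pos (by rw [hi, hjp])]
      · rw [if_neg (fun h => hi (by rw [h, Equiv.symm_apply_apply])),
          if_neg (fun h => hi (pair_inj h).1)]
    · rw [if_neg hjp, add_theta, if_neg (fun h => hjp (pair_inj h).2)]

lemma nMap_add_xi_theta (p q : Fin n) (σ : Equiv.Perm (Fin n)) :
    nMap p q σ + xi (theta n) = xi (theta n) := by
  funext a
  rw [add_apply, xi_apply, add_theta]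

lemma nMap_add_xi_pair (p q c₁ c₂ : Fin n) (σ : Equiv.Perm (Fin n)) :
    nMap p q σ + xi (pair c₁ c₂) =
      if q = c₁ then nMap p c₂ σ else xi (theta n) := by
  by_cases hq : q = c₁
  · rw [if_pos hq]; funext a
    rcases brandt_cases a with rfl | ⟨i, j, rfl⟩
    · rfl
    · rw [add_apply, xi_apply, nMap_pair, nMap_pair]
      by_cases hjp : j = p
      · rw [if_pos hjp, if_pos hjp, pair_add_pair, if_pos hq]
      · rw [if_neg hjp, if_neg hjp, theta_add]
  · rw [if_neg hq]; funext a
    rcases brandt_cases a with rfl | ⟨i, j, rfl⟩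
    · rfl
    · rw [add_apply, xi_apply, nMap_pair, xi_apply]
      by_cases hjp : j = p
      · rw [if_pos hjp, pair_add_pair, if_neg hq]
      · rw [if_neg hjp, theta_add]

lemma nMap_add_nMap (p q p' q' : Fin n) (σ σ' : Equiv.Perm (Fin n)) :
    nMap p q σ + nMap p' q' σ' =
      if p = p' then sMap (σ'.symm q) p (pair (σ (σ'.symm q)) q')
      else xi (theta n) := by
  by_cases hp : p = p'
  · subst hp; rw [if_pos rfl]; funext a
    rcases brandt_cases a with rfl | ⟨i, j, rfl⟩
    · rw [sMap_apply, if_neg (Ne.symm (pair_ne_theta _ _))]; rfl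
    · rw [add_apply, nMap_pair, nMap_pair, sMap_apply]
      by_cases hjp : j = p
      · rw [if_pos hjp, if_pos hjp, pair_add_pair]
        by_cases hi : i = σ'.symm q
        · rw [if_pos (by rw [hi, Equiv.apply_symm_apply]), if_pos (by rw [hi, hjp]), hi]
        · rw [if_neg (fun h => hi (by rw [h, Equiv.symm_apply_apply])),
            if_neg (fun h => hi (pair_inj h).1)]
      · rw [if_neg hjp, theta_add, if_neg (fun h => hjp (pair_inj h).2)]
  · rw [if_neg hp]; funext a
    rcases brandt_cases a with rfl | ⟨i, j, rfl⟩
    · rfl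
    · rw [add_apply, nMap_pair, nMap_pair, xi_apply]
      by_cases hjp : j = p
      · rw [if_pos hjp, if_neg (fun h => hp (hjp.symm.trans h)), add_theta]
      · rw [if_neg hjp, theta_add]

lemma good_add {f g : MB n} (hf : Good f) (hg : Good g) : Good (f + g) := by
  rcases hf with ⟨c, rfl⟩ | ⟨p, q, σ, rfl⟩ | ⟨k, l, α, rfl⟩
  · rcases hg with ⟨d, rfl⟩ | ⟨p, q, σ, rfl⟩ | ⟨k, l, α, rfl⟩
    · exact Or.inl ⟨c + d, xi_add_xi c d⟩
    · rcases brandt_cases c with rfl | ⟨c₁, c₂, rfl⟩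
      · exact Or.inl ⟨theta n, xi_theta_add _⟩
      · exact Or.inr (Or.inr ⟨_, _, _, xi_pair_add_nMap c₁ c₂ p q σ⟩)
    · exact Or.inr (Or.inr ⟨k, l, _, add_sMap _ k l α⟩)
  · rcases hg with ⟨d, rfl⟩ | ⟨p', q', σ', rfl⟩ | ⟨k, l, α, rfl⟩
    · rcases brandt_cases d with rfl | ⟨c₁, c₂, rfl⟩
      · exact Or.inl ⟨theta n, nMap_add_xi_theta p q σ⟩
      · rw [nMap_add_xi_pair]
        split_ifs
        · exact Or.inr (Or.inl ⟨_, _, _, rfl⟩)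
        · exact Or.inl ⟨_, rfl⟩
    · rw [nMap_add_nMap]
      split_ifs
      · exact Or.inr (Or.inr ⟨_, _, _, rfl⟩)
      · exact Or.inl ⟨_, rfl⟩
    · exact Or.inr (Or.inr ⟨k, l, _, add_sMap _ k l α⟩)
  · exact Or.inr (Or.inr ⟨k, l, _, sMap_add _ k l α⟩)

lemma aplus_good (hn : 2 ≤ n) {f : MB n} (hf : f ∈ Aplus n) : Good f :=
  AddSubsemigroup.closure_induction (p := fun x _ => Good x)
    (fun _ h => affine_good hn h)
    (fun _ _ _ _ hx hy => good_add hx hy) hf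

end Stmt12
namespace Stmt12
open Brandt

variable {n : ℕ}

lemma supp_xi_theta : supp (xi (theta n) : MB n) = ∅ := by
  ext a; simp [supp, xi_apply]

lemma supp_xi_pair (c₁ c₂ : Fin n) : supp (xi (pair c₁ c₂) : MB n) = Set.univ := by
  ext a
  simp only [supp, Set.mem_setOf_eq, Set.mem_univ, iff_true, xi_apply]
  exact pair_ne_theta _ _

lemma card_brandt : Nat.card (Brandt n) = n ^ 2 + 1 := by
  have h : Nat.card (Brandt n) = Nat.card (Option (Fin n × Fin n)) := rfl
  rw [h, Nat.card_eq_fintype_card]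
  simp [Fintype.card_option, Fintype.card_prod, Fintype.card_fin]
  ring

lemma supp_nMap (p q : Fin n) (σ : Equiv.Perm (Fin n)) :
    supp (nMap p q σ) = Set.range (fun i => pair i p) := by
  ext a
  constructor
  · intro ha
    rcases brandt_cases a with rfl | ⟨i, j, rfl⟩
    · exact absurd rfl ha
    · refine ⟨i, ?_⟩
      by_cases hjp : j = p
      · rw [hjp]
      · exact absurd (by rw [nMap_pair, if_neg hjp] : nMap p q σ (pair i j) = theta n) ha
  · rintro ⟨i, rfl⟩
    show nMap p q σ (pair i p) ≠ theta n
    rw [nMap_pair, if_pos rfl]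
    exact pair_ne_theta _ _

lemma ncard_supp_nMap (p q : Fin n) (σ : Equiv.Perm (Fin n)) :
    (supp (nMap p q σ)).ncard = n := by
  rw [supp_nMap, ← Nat.card_coe_set_eq,
    Nat.card_range_of_injective (f := fun i : Fin n => pair i p)
      (fun i i' h => (pair_inj h).1),
    Nat.card_eq_fintype_card, Fintype.card_fin]

lemma ncard_supp_sMap_le (k l : Fin n) (α : Brandt n) :
    (supp (sMap k l α)).ncard ≤ 1 := by
  have hsub : supp (sMap k l α) ⊆ {pair k l} := by
    intro a ha
    simp only [Set.mem_singleton_iff]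
    by_contra hne
    exact ha (by rw [sMap_apply, if_neg hne])
  calc (supp (sMap k l α)).ncard ≤ ({pair k l} : Set (Brandt n)).ncard :=
        Set.ncard_le_ncard hsub (Set.finite_singleton _)
    _ = 1 := Set.ncard_singleton _

lemma supp_add_subset_left (f g : MB n) : supp (f + g) ⊆ supp f := by
  intro a ha
  by_contra hf
  simp only [supp, Set.mem_setOf_eq, not_not] at hf
  exact ha (by rw [add_apply, hf, theta_add])

lemma supp_add_subset_right (f g : MB n) : supp (f + g) ⊆ supp g := by
  intro a ha
  by_contra hg
  simp only [supp, Set.mem_setOf_eq, not_not] at hg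
  exact ha (by rw [add_apply, hg, add_theta])

lemma mem_supportPart_iff (hn : 2 ≤ n) (f : MB n) :
    f ∈ supportPart (AplusSet n) n ↔ ∃ p q σ, f = nMap p q σ := by
  constructor
  · rintro ⟨hf, hcard⟩
    rcases aplus_good hn hf with ⟨c, rfl⟩ | h | ⟨k, l, α, rfl⟩
    · rcases brandt_cases c with rfl | ⟨c₁, c₂, rfl⟩
      · rw [supp_xi_theta, Set.ncard_empty] at hcard; omega
      · rw [supp_xi_pair, Set.ncard_univ, card_brandt] at hcard
        have h2 : n ≤ n ^ 2 := by nlinarith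
        omega
    · exact h
    · have := ncard_supp_sMap_le k l α
      omega
  · rintro ⟨p, q, σ, rfl⟩
    exact ⟨AddSubsemigroup.subset_closure (nMap_affine p q σ), ncard_supp_nMap p q σ⟩

/-- The parametrization of n-support maps. -/
def F (n : ℕ) : Equiv.Perm (Fin n) × Fin n × Fin n → MB n :=
  fun x => nMap x.2.1 x.2.2 x.1

lemma F_inj (hn : 2 ≤ n) : Function.Injective (F n) := by
  rintro ⟨σ, p, q⟩ ⟨σ', p', q'⟩ h
  simp only [F] at h
  have i0 : Fin n := ⟨0, by omega⟩
  have h1 := congrFun h (pair i0 p)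
  rw [nMap_pair, nMap_pair, if_pos rfl] at h1
  by_cases hp : p = p'
  · subst hp
    rw [if_pos rfl] at h1
    obtain ⟨-, hq⟩ := pair_inj h1
    subst hq
    have hσ : σ = σ' := by
      ext i
      have h2 := congrFun h (pair i p)
      rw [nMap_pair, nMap_pair, if_pos rfl, if_pos rfl] at h2
      exact congrArg Fin.val (pair_inj h2).1
    rw [hσ]
  · rw [if_neg hp] at h1
    exact absurd h1 (pair_ne_theta _ _)

lemma supportPart_eq (hn : 2 ≤ n) :
    supportPart (AplusSet n) n = Set.range (F n) := by
  ext f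
  rw [mem_supportPart_iff hn]
  constructor
  · rintro ⟨p, q, σ, rfl⟩; exact ⟨(σ, p, q), rfl⟩
  · rintro ⟨⟨σ, p, q⟩, rfl⟩; exact ⟨p, q, σ, rfl⟩

lemma card_supportPart (hn : 2 ≤ n) :
    (supportPart (AplusSet n) n).ncard = n.factorial * n ^ 2 := by
  rw [supportPart_eq hn, ← Nat.card_coe_set_eq,
    Nat.card_range_of_injective (F_inj hn), Nat.card_eq_fintype_card]
  rw [Fintype.card_prod, Fintype.card_prod, Fintype.card_perm, Fintype.card_fin]
  ring

lemma indep_supportPart (hn : 2 ≤ n) : IndepSet (supportPart (AplusSet n) n) := by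
  intro a ha hmem
  set U := supportPart (AplusSet n) n with hU
  have key : a ∈ U \ {a} ∨ (supp a).ncard ≤ 1 := by
    refine AddSubsemigroup.closure_induction
      (p := fun x _ => x ∈ U \ {a} ∨ (supp x).ncard ≤ 1)
      (fun x h => Or.inl h) (fun x y _ _ hx hy => ?_) hmem
    right
    rcases hx with hx | hx
    · rcases hy with hy | hy
      · obtain ⟨p, q, σ, rfl⟩ := (mem_supportPart_iff hn x).mp hx.1
        obtain ⟨p', q', σ', rfl⟩ := (mem_supportPart_iff hn y).mp hy.1
        rw [nMap_add_nMap]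
        split_ifs
        · exact ncard_supp_sMap_le _ _ _
        · rw [supp_xi_theta, Set.ncard_empty]; omega
      · exact le_trans (Set.ncard_le_ncard (supp_add_subset_right x y) (Set.toFinite _)) hy
    · exact le_trans (Set.ncard_le_ncard (supp_add_subset_left x y) (Set.toFinite _)) hx
  rcases key with h | h
  · exact h.2 rfl
  · have hc : (supp a).ncard = n := ha.2
    omega

end Stmt12
/-- For `n ≥ 2`, the set `A⁺(Bₙ)ₙ` of `n`-support elements is an
independent subset of `A⁺(Bₙ)` of cardinality `(n!)·n²`. -/
theorem stmt_12 (n : ℕ) (hn : 2 ≤ n) :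
    supportPart (AplusSet n) n ⊆ AplusSet n ∧
    IndepSet (supportPart (AplusSet n) n) ∧
    (supportPart (AplusSet n) n).ncard = n.factorial * n ^ 2 := by
  exact ⟨fun f hf => hf.1, Stmt12.indep_supportPart hn, Stmt12.card_supportPart hn⟩
end
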